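/- arXiv:1810.01521 — 3 statements merged into one kernel-verified Lean document; each statement's English description precedes it below -/
import Mathlib

section
/- Suppose (i) n_+^P(x)-n_+^Q(x) ≥ 2 for all x ≥ τ_2 and n_+^Q(x)=0 for all x ∈ (0,τ_2], and (ii) Im R(t) > 0 on the sector {t : 0<|t|<τ_2, 0<Arg t<π/r}. Then the function P(t)R(t) has a unique zero t_a in the open interval (τ_1,τ_2) when τ_1<τ_2 (possibly of multiplicity greater than one), while t_a = τ_1 = τ_2 when τ_1=τ_2; furthermore t_a is the smallest positive zero of P(t)R(t). -/
noncomputable section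

/-- The monic real polynomial `∏ (X - τ k)` over indices `-pm < k ≤ pp`. -/
noncomputable def prodPoly (pm pp : ℕ) (τ : ℤ → ℝ) : Polynomial ℝ :=
  ∏ k ∈ Finset.Ioc (-(pm : ℤ)) (pp : ℤ), (Polynomial.X - Polynomial.C (τ k))

/-- Evaluation of a real polynomial at a complex number. -/
noncomputable def cval (p : Polynomial ℝ) (t : ℂ) : ℂ :=
  Polynomial.aeval t p

/-- `R(t) = r - t P'(t)/P(t) + t Q'(t)/Q(t)`. -/
noncomputable def Rfun (r pm pp qm qp : ℕ) (τ γ : ℤ → ℝ) (t : ℂ) : ℂ :=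
  (r : ℂ)
    - t * cval (Polynomial.derivative (prodPoly pm pp τ)) t / cval (prodPoly pm pp τ) t
    + t * cval (Polynomial.derivative (prodPoly qm qp γ)) t / cval (prodPoly qm qp γ) t

/-- The continuous extension of `P(t) * R(t)`, namely
`r P(t) - t P'(t) + t P(t) Q'(t)/Q(t)`. -/
noncomputable def PRfun (r pm pp qm qp : ℕ) (τ γ : ℤ → ℝ) (t : ℂ) : ℂ :=
  (r : ℂ) * cval (prodPoly pm pp τ) t
    - t * cval (Polynomial.derivative (prodPoly pm pp τ)) t
    + t * cval (prodPoly pm pp τ) t * cval (Polynomial.derivative (prodPoly qm qp γ)) t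
        / cval (prodPoly qm qp γ) t

/-- Number of zeros (with multiplicity) lying in `(0, x]`. -/
noncomputable def nPos (pm pp : ℕ) (τ : ℤ → ℝ) (x : ℝ) : ℕ :=
  ((Finset.Ioc (-(pm : ℤ)) (pp : ℤ)).filter fun k => 0 < τ k ∧ τ k ≤ x).card

/-- Number of zeros (with multiplicity) lying in `[x, 0)`. -/
noncomputable def nNeg (pm pp : ℕ) (τ : ℤ → ℝ) (x : ℝ) : ℕ :=
  ((Finset.Ioc (-(pm : ℤ)) (pp : ℤ)).filter fun k => x ≤ τ k ∧ τ k < 0).card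

/-- `Σ_k θ_k(t) - Σ_j η_j(t)` where `θ_k(t) = Arg (t - τ_k)` and `η_j(t) = Arg (t - γ_j)`. -/
noncomputable def angleSum (pm pp qm qp : ℕ) (τ γ : ℤ → ℝ) (t : ℂ) : ℝ :=
  (∑ k ∈ Finset.Ioc (-(pm : ℤ)) (pp : ℤ), (t - (τ k : ℂ)).arg)
    - ∑ j ∈ Finset.Ioc (-(qm : ℤ)) (qp : ℤ), (t - (γ j : ℂ)).arg

/-- `z(θ) = -P(t)/(t^r Q(t))` evaluated at `t = tau(θ) e^{iθ}`. -/
noncomputable def zfun (r pm pp qm qp : ℕ) (τ γ : ℤ → ℝ) (tau : ℝ → ℝ) (θ : ℝ) : ℂ :=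
  -(cval (prodPoly pm pp τ) ((tau θ : ℂ) * Complex.exp ((θ : ℂ) * Complex.I)))
    / (((tau θ : ℂ) * Complex.exp ((θ : ℂ) * Complex.I)) ^ r
        * cval (prodPoly qm qp γ) ((tau θ : ℂ) * Complex.exp ((θ : ℂ) * Complex.I)))

/-- The denominator `P(t) + z t^r Q(t)`, viewed as a formal power series in `t` whose
coefficients are polynomials in `z`. -/
noncomputable def Dgen (r : ℕ) (P Q : Polynomial ℝ) : PowerSeries (Polynomial ℝ) :=
  ((P.map Polynomial.C
      + Polynomial.C Polynomial.X * Polynomial.X ^ r * Q.map Polynomial.C :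
      Polynomial (Polynomial ℝ)) : PowerSeries (Polynomial ℝ))

/-- `H` is the sequence of polynomials generated by
`Σ_m H_m(z) t^m = 1/(P(t) + z t^r Q(t))` (Taylor expansion at `t = 0`). -/
def IsGenSeq (r : ℕ) (P Q : Polynomial ℝ) (H : ℕ → Polynomial ℝ) : Prop :=
  PowerSeries.mk H * Dgen r P Q = 1

open Polynomial Finset Filter Set Topology Complex

lemma cval_ofReal (p : Polynomial ℝ) (x : ℝ) : cval p (x : ℂ) = ((p.eval x : ℝ) : ℂ) := by
  rw [cval, show ((x : ℝ) : ℂ) = algebraMap ℝ ℂ x from rfl,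
    Polynomial.aeval_algebraMap_apply, Polynomial.aeval_def]
  rfl

lemma cval_eq_eval_map (p : Polynomial ℝ) :
    cval p = fun t => (p.map (algebraMap ℝ ℂ)).eval t := by
  funext t
  simp only [cval]
  rw [Polynomial.aeval_def, Polynomial.eval₂_eq_eval_map]

lemma differentiable_cval (p : Polynomial ℝ) : Differentiable ℂ (cval p) := by
  rw [cval_eq_eval_map]; exact (p.map (algebraMap ℝ ℂ)).differentiable

lemma eval_prodPoly (pm pp : ℕ) (τ : ℤ → ℝ) (x : ℝ) :
    (prodPoly pm pp τ).eval x = ∏ k ∈ Finset.Ioc (-(pm : ℤ)) (pp : ℤ), (x - τ k) := by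
  simp [prodPoly, Polynomial.eval_prod]

lemma deriv_prod_lin (s : Finset ℤ) (c : ℤ → ℝ) :
    Polynomial.derivative (∏ k ∈ s, (Polynomial.X - Polynomial.C (c k)))
      = ∑ k ∈ s, ∏ j ∈ s.erase k, (Polynomial.X - Polynomial.C (c j)) := by
  classical
  induction s using Finset.induction_on with
  | empty => simp
  | insert a s ha ih =>
    rw [Finset.prod_insert ha, derivative_mul, ih, Finset.sum_insert ha,
      Finset.erase_insert ha, derivative_sub, derivative_X, derivative_C, sub_zero, one_mul,
      Finset.mul_sum]
    congr 1
    refine Finset.sum_congr rfl fun k hk => ?_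
    rw [Finset.erase_insert_of_ne (by rintro rfl; exact ha hk), Finset.prod_insert
      (fun h => ha (Finset.mem_of_mem_erase h))]

lemma eval_deriv_prodPoly (pm pp : ℕ) (τ : ℤ → ℝ) (x : ℝ) :
    (Polynomial.derivative (prodPoly pm pp τ)).eval x
      = ∑ k ∈ Finset.Ioc (-(pm : ℤ)) (pp : ℤ),
          ∏ j ∈ (Finset.Ioc (-(pm : ℤ)) (pp : ℤ)).erase k, (x - τ j) := by
  rw [prodPoly, deriv_prod_lin]
  simp [Polynomial.eval_finset_sum, Polynomial.eval_prod]

lemma logDeriv_sum (s : Finset ℤ) (c : ℤ → ℝ) (x : ℝ) (h : ∀ k ∈ s, x - c k ≠ 0) :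
    (∑ k ∈ s, ∏ j ∈ s.erase k, (x - c j)) / ∏ k ∈ s, (x - c k)
      = ∑ k ∈ s, (x - c k)⁻¹ := by
  classical
  rw [Finset.sum_div]
  refine Finset.sum_congr rfl fun k hk => ?_
  rw [← Finset.mul_prod_erase s _ hk]
  have h2 : ∏ j ∈ s.erase k, (x - c j) ≠ 0 :=
    Finset.prod_ne_zero_iff.2 fun j hj => h j (Finset.mem_of_mem_erase hj)
  rw [mul_comm, ← div_div, div_self h2, one_div]

/-- real version of `R` as a sum of simple fractions -/
noncomputable def Sfun (r pm pp qm qp : ℕ) (τ γ : ℤ → ℝ) (x : ℝ) : ℝ :=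
  (r : ℝ) - ∑ k ∈ Finset.Ioc (-(pm : ℤ)) (pp : ℤ), x / (x - τ k)
    + ∑ j ∈ Finset.Ioc (-(qm : ℤ)) (qp : ℤ), x / (x - γ j)

lemma xlogDeriv (pm pp : ℕ) (τ : ℤ → ℝ) (x : ℝ)
    (h : (prodPoly pm pp τ).eval x ≠ 0) :
    x * (Polynomial.derivative (prodPoly pm pp τ)).eval x / (prodPoly pm pp τ).eval x
      = ∑ k ∈ Finset.Ioc (-(pm : ℤ)) (pp : ℤ), x / (x - τ k) := by
  have h' : ∀ k ∈ Finset.Ioc (-(pm : ℤ)) (pp : ℤ), x - τ k ≠ 0 := by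
    rw [eval_prodPoly] at h
    exact fun k hk => Finset.prod_ne_zero_iff.1 h k hk
  rw [mul_div_assoc, eval_deriv_prodPoly, eval_prodPoly, logDeriv_sum _ _ _ h', Finset.mul_sum]
  exact Finset.sum_congr rfl fun k hk => (div_eq_mul_inv x _).symm

lemma Sfun_eq_Rre (r pm pp qm qp : ℕ) (τ γ : ℤ → ℝ) (x : ℝ)
    (hP : (prodPoly pm pp τ).eval x ≠ 0) (hQ : (prodPoly qm qp γ).eval x ≠ 0) :
    Sfun r pm pp qm qp τ γ x
      = (r : ℝ) - x * (Polynomial.derivative (prodPoly pm pp τ)).eval x / (prodPoly pm pp τ).eval x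
          + x * (Polynomial.derivative (prodPoly qm qp γ)).eval x / (prodPoly qm qp γ).eval x := by
  rw [Sfun, xlogDeriv _ _ _ _ hP, xlogDeriv _ _ _ _ hQ]

lemma Rfun_real_eq (r pm pp qm qp : ℕ) (τ γ : ℤ → ℝ) (x : ℝ)
    (hP : (prodPoly pm pp τ).eval x ≠ 0) (hQ : (prodPoly qm qp γ).eval x ≠ 0) :
    Rfun r pm pp qm qp τ γ (x : ℂ) = ((Sfun r pm pp qm qp τ γ x : ℝ) : ℂ) := by
  rw [Rfun, cval_ofReal, cval_ofReal, cval_ofReal, cval_ofReal, Sfun_eq_Rre _ _ _ _ _ _ _ _ hP hQ]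
  push_cast
  ring

lemma PRfun_real_eq (r pm pp qm qp : ℕ) (τ γ : ℤ → ℝ) (x : ℝ) :
    PRfun r pm pp qm qp τ γ (x : ℂ)
      = (((r : ℝ) * (prodPoly pm pp τ).eval x
          - x * (Polynomial.derivative (prodPoly pm pp τ)).eval x
          + x * (prodPoly pm pp τ).eval x * (Polynomial.derivative (prodPoly qm qp γ)).eval x
              / (prodPoly qm qp γ).eval x : ℝ) : ℂ) := by
  rw [PRfun, cval_ofReal, cval_ofReal, cval_ofReal, cval_ofReal]
  push_cast
  ring

lemma PRre_eq (r pm pp qm qp : ℕ) (τ γ : ℤ → ℝ) (x : ℝ)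
    (hP : (prodPoly pm pp τ).eval x ≠ 0) (hQ : (prodPoly qm qp γ).eval x ≠ 0) :
    (r : ℝ) * (prodPoly pm pp τ).eval x
        - x * (Polynomial.derivative (prodPoly pm pp τ)).eval x
        + x * (prodPoly pm pp τ).eval x * (Polynomial.derivative (prodPoly qm qp γ)).eval x
            / (prodPoly qm qp γ).eval x
      = (prodPoly pm pp τ).eval x * Sfun r pm pp qm qp τ γ x := by
  rw [Sfun_eq_Rre _ _ _ _ _ _ _ _ hP hQ]
  field_simp

/-- the polynomial `r P Q - X P' Q + X P Q'` -/
noncomputable def Npoly (r pm pp qm qp : ℕ) (τ γ : ℤ → ℝ) : Polynomial ℝ :=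
  Polynomial.C (r : ℝ) * prodPoly pm pp τ * prodPoly qm qp γ
    - Polynomial.X * Polynomial.derivative (prodPoly pm pp τ) * prodPoly qm qp γ
    + Polynomial.X * prodPoly pm pp τ * Polynomial.derivative (prodPoly qm qp γ)

lemma Npoly_eval (r pm pp qm qp : ℕ) (τ γ : ℤ → ℝ) (x : ℝ)
    (hP : (prodPoly pm pp τ).eval x ≠ 0) (hQ : (prodPoly qm qp γ).eval x ≠ 0) :
    (Npoly r pm pp qm qp τ γ).eval x
      = (prodPoly pm pp τ).eval x * (prodPoly qm qp γ).eval x * Sfun r pm pp qm qp τ γ x := by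
  rw [Sfun_eq_Rre _ _ _ _ _ _ _ _ hP hQ, Npoly]
  simp only [Polynomial.eval_add, Polynomial.eval_sub, Polynomial.eval_mul, Polynomial.eval_C,
    Polynomial.eval_X]
  field_simp

lemma hasDerivAt_S (r pm pp qm qp : ℕ) (τ γ : ℤ → ℝ)
    (hC3 : ∀ t : ℂ, 0 < ‖t‖ → ‖t‖ < τ 2 → 0 < t.arg →
      t.arg < Real.pi / r → 0 < (Rfun r pm pp qm qp τ γ t).im)
    (hr : 2 ≤ r)
    (x : ℝ) (hx0 : 0 < x) (hx2 : x < τ 2)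
    (hP : (prodPoly pm pp τ).eval x ≠ 0) (hQ : (prodPoly qm qp γ).eval x ≠ 0) :
    ∃ c : ℝ, 0 ≤ c ∧
      HasDerivAt (fun y : ℝ => (Rfun r pm pp qm qp τ γ (y : ℂ)).re) c x := by
  set F := Rfun r pm pp qm qp τ γ with hF
  have hPc : cval (prodPoly pm pp τ) (x : ℂ) ≠ 0 := by
    rw [cval_ofReal]; exact_mod_cast hP
  have hQc : cval (prodPoly qm qp γ) (x : ℂ) ≠ 0 := by
    rw [cval_ofReal]; exact_mod_cast hQ
  have hd : DifferentiableAt ℂ F (x : ℂ) := by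
    have h1 : DifferentiableAt ℂ (fun t : ℂ =>
        (r : ℂ) - t * cval (Polynomial.derivative (prodPoly pm pp τ)) t / cval (prodPoly pm pp τ) t
          + t * cval (Polynomial.derivative (prodPoly qm qp γ)) t / cval (prodPoly qm qp γ) t)
        (x : ℂ) := by
      apply DifferentiableAt.add
      · apply DifferentiableAt.sub (differentiableAt_const _)
        exact (differentiableAt_id.mul (differentiable_cval _).differentiableAt).div
          (differentiable_cval _).differentiableAt hPc
      · exact (differentiableAt_id.mul (differentiable_cval _).differentiableAt).div
          (differentiable_cval _).differentiableAt hQc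
    exact h1
  set c : ℂ := deriv F (x : ℂ) with hc
  have hFd : HasDerivAt F c (x : ℂ) := hd.hasDerivAt
  -- real part along the real axis
  have gder : HasDerivAt (fun y : ℝ => (F (y : ℂ)).re) c.re x := hFd.real_of_complex
  -- imaginary part along the vertical line
  have hinner : HasDerivAt (fun w : ℂ => (x : ℂ) + w * Complex.I) Complex.I 0 := by
    simpa using ((hasDerivAt_id (0 : ℂ)).mul_const Complex.I).const_add (x : ℂ)
  have hcomp : HasDerivAt (fun w : ℂ => F ((x : ℂ) + w * Complex.I)) (c * Complex.I) 0 := by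
    have : HasDerivAt F c ((x : ℂ) + 0 * Complex.I) := by simpa using hFd
    exact this.comp 0 hinner
  have hcomp2 : HasDerivAt (fun w : ℂ => -Complex.I * F ((x : ℂ) + w * Complex.I)) c 0 := by
    have := hcomp.const_mul (-Complex.I)
    have h2 : -Complex.I * (c * Complex.I) = c := by
      rw [mul_comm c Complex.I, ← mul_assoc, neg_mul, Complex.I_mul_I, neg_neg, one_mul]
    rwa [h2] at this
  have φder : HasDerivAt (fun ε : ℝ => (F ((x : ℂ) + (ε : ℂ) * Complex.I)).im) c.re 0 := by
    have := hcomp2.real_of_complex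
    convert this using 2 with ε
    simp [Complex.neg_re, Complex.mul_re]
  have hφ0 : (F ((x : ℂ) + (0 : ℝ) * Complex.I)).im = 0 := by
    have : F ((x : ℂ) + (0 : ℝ) * Complex.I) = F (x : ℂ) := by norm_num
    rw [this, hF, Rfun_real_eq _ _ _ _ _ _ _ _ hP hQ]
    simp
  -- eventually positive imaginary part
  have hmap : Filter.Tendsto (fun ε : ℝ => (x : ℂ) + (ε : ℂ) * Complex.I)
      (nhdsWithin 0 (Set.Ioi 0)) (nhds (x : ℂ)) := by
    have hcont : Continuous (fun ε : ℝ => (x : ℂ) + (ε : ℂ) * Complex.I) := by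
      continuity
    have := (hcont.tendsto 0).mono_left
      (nhdsWithin_le_nhds : nhdsWithin (0:ℝ) (Set.Ioi 0) ≤ nhds 0)
    simpa using this
  have habs : ∀ᶠ ε : ℝ in nhdsWithin 0 (Set.Ioi 0),
      ‖(x : ℂ) + (ε : ℂ) * Complex.I‖ < τ 2 := by
    have : Filter.Tendsto (fun ε : ℝ => ‖(x : ℂ) + (ε : ℂ) * Complex.I‖)
        (nhdsWithin 0 (Set.Ioi 0)) (nhds x) := by
      have := (continuous_norm.tendsto (x : ℂ)).comp hmap
      simpa [Function.comp_def, abs_of_pos hx0] using this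
    exact this.eventually_lt_const hx2
  have harg : ∀ᶠ ε : ℝ in nhdsWithin 0 (Set.Ioi 0),
      ((x : ℂ) + (ε : ℂ) * Complex.I).arg < Real.pi / r := by
    have hca : ContinuousAt Complex.arg (x : ℂ) :=
      Complex.continuousAt_arg (Complex.ofReal_mem_slitPlane.2 hx0)
    have : Filter.Tendsto (fun ε : ℝ => ((x : ℂ) + (ε : ℂ) * Complex.I).arg)
        (nhdsWithin 0 (Set.Ioi 0)) (nhds 0) := by
      have := (hca.tendsto).comp hmap
      simpa [Function.comp_def, Complex.arg_ofReal_of_nonneg hx0.le] using this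
    refine this.eventually_lt_const ?_
    positivity
  have hev : ∀ᶠ ε : ℝ in nhdsWithin 0 (Set.Ioi 0),
      0 < (F ((x : ℂ) + (ε : ℂ) * Complex.I)).im := by
    filter_upwards [habs, harg, self_mem_nhdsWithin] with ε h1 h2 (h3 : 0 < ε)
    set t : ℂ := (x : ℂ) + (ε : ℂ) * Complex.I with ht
    have him : t.im = ε := by simp [ht]
    have hne : t ≠ 0 := by
      intro h
      rw [h] at him
      simp at him
      linarith
    have habs0 : 0 < ‖t‖ := by
      rwa [norm_pos_iff]
    have hargpos : 0 < t.arg := by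
      rcases lt_or_eq_of_le (Complex.arg_nonneg_iff.2 (by rw [him]; exact h3.le)) with h | h
      · exact h
      · exfalso
        have := Complex.arg_eq_zero_iff.1 h.symm
        rw [him] at this
        linarith [this.2]
    exact hC3 t habs0 h1 hargpos h2
  -- conclude nonnegativity of c.re
  have hcre : 0 ≤ c.re := by
    have hsl : HasDerivWithinAt (fun ε : ℝ => (F ((x : ℂ) + (ε : ℂ) * Complex.I)).im) c.re
        (Set.Ioi 0) 0 := φder.hasDerivWithinAt
    rw [hasDerivWithinAt_iff_tendsto_slope] at hsl
    have hds : (Set.Ioi (0:ℝ)) \ {0} = Set.Ioi 0 :=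
      Set.diff_singleton_eq_self (by simp)
    rw [hds] at hsl
    refine ge_of_tendsto hsl ?_
    filter_upwards [hev, self_mem_nhdsWithin] with ε h1 (h2 : 0 < ε)
    rw [slope_def_field, hφ0, sub_zero, sub_zero]
    positivity
  exact ⟨c.re, hcre, gder⟩


lemma contAt_term (c a : ℝ) (h : a ≠ c) : ContinuousAt (fun x : ℝ => x / (x - c)) a :=
  continuousAt_id.div ((continuous_id.sub continuous_const).continuousAt) (sub_ne_zero.2 h)

lemma tendsto_sub_nhdsGT (c : ℝ) :
    Filter.Tendsto (fun x : ℝ => x - c) (nhdsWithin c (Set.Ioi c)) (nhdsWithin 0 (Set.Ioi 0)) := by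
  apply tendsto_nhdsWithin_of_tendsto_nhds_of_eventually_within
  · have := ((continuous_id.sub (continuous_const (y := c))).tendsto c).mono_left
      (nhdsWithin_le_nhds : nhdsWithin c (Set.Ioi c) ≤ nhds c)
    convert this using 2 <;> simp
  · filter_upwards [self_mem_nhdsWithin] with y hy
    simpa [Set.mem_Ioi, sub_pos] using hy

lemma tendsto_sub_nhdsLT (c : ℝ) :
    Filter.Tendsto (fun x : ℝ => x - c) (nhdsWithin c (Set.Iio c)) (nhdsWithin 0 (Set.Iio 0)) := by
  apply tendsto_nhdsWithin_of_tendsto_nhds_of_eventually_within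
  · have := ((continuous_id.sub (continuous_const (y := c))).tendsto c).mono_left
      (nhdsWithin_le_nhds : nhdsWithin c (Set.Iio c) ≤ nhds c)
    convert this using 2 <;> simp
  · filter_upwards [self_mem_nhdsWithin] with y hy
    simpa [Set.mem_Iio, sub_neg] using hy

lemma tendsto_main_term_atTop (c : ℝ) (hc : 0 < c) :
    Filter.Tendsto (fun x : ℝ => x / (x - c)) (nhdsWithin c (Set.Ioi c)) Filter.atTop := by
  have h2 := tendsto_inv_nhdsGT_zero.comp (tendsto_sub_nhdsGT c)
  have h3 : Filter.Tendsto (fun x : ℝ => x) (nhdsWithin c (Set.Ioi c)) (nhds c) :=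
    tendsto_id.mono_left nhdsWithin_le_nhds
  simpa [div_eq_mul_inv, Function.comp] using Filter.Tendsto.pos_mul_atTop hc h3 h2

lemma tendsto_inv_zero_atBot' :
    Filter.Tendsto (fun x : ℝ => x⁻¹) (nhdsWithin 0 (Set.Iio 0)) Filter.atBot := by
  have hneg : Filter.Tendsto (fun x : ℝ => -x) (nhdsWithin 0 (Set.Iio 0))
      (nhdsWithin 0 (Set.Ioi 0)) := by
    apply tendsto_nhdsWithin_of_tendsto_nhds_of_eventually_within
    · have := (continuous_neg.tendsto (0:ℝ)).mono_left
        (nhdsWithin_le_nhds : nhdsWithin (0:ℝ) (Set.Iio 0) ≤ nhds 0)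
      simpa using this
    · filter_upwards [self_mem_nhdsWithin] with y hy
      simpa [Set.mem_Ioi] using hy
  have h1 := tendsto_inv_nhdsGT_zero.comp hneg
  have h2 := tendsto_neg_atTop_atBot.comp h1
  have heq : (Neg.neg ∘ (fun x : ℝ => x⁻¹) ∘ fun x : ℝ => -x) = fun x : ℝ => x⁻¹ := by
    funext x
    simp [Function.comp, inv_neg]
  rwa [heq] at h2

lemma tendsto_main_term_atBot (c : ℝ) (hc : 0 < c) :
    Filter.Tendsto (fun x : ℝ => x / (x - c)) (nhdsWithin c (Set.Iio c)) Filter.atBot := by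
  have h2 := tendsto_inv_zero_atBot'.comp (tendsto_sub_nhdsLT c)
  have h3 : Filter.Tendsto (fun x : ℝ => x) (nhdsWithin c (Set.Iio c)) (nhds c) :=
    tendsto_id.mono_left nhdsWithin_le_nhds
  simpa [div_eq_mul_inv, Function.comp] using Filter.Tendsto.pos_mul_atBot hc h3 h2

lemma isOpen_good (pm pp qm qp : ℕ) (τ γ : ℤ → ℝ) :
    IsOpen {y : ℝ | (prodPoly pm pp τ).eval y ≠ 0 ∧ (prodPoly qm qp γ).eval y ≠ 0} := by
  have h1 : IsOpen {y : ℝ | (prodPoly pm pp τ).eval y ≠ 0} :=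
    isOpen_compl_iff.mpr ((isClosed_singleton (x := (0:ℝ))).preimage
      (prodPoly pm pp τ).continuous)
  have h2 : IsOpen {y : ℝ | (prodPoly qm qp γ).eval y ≠ 0} :=
    isOpen_compl_iff.mpr ((isClosed_singleton (x := (0:ℝ))).preimage
      (prodPoly qm qp γ).continuous)
  exact h1.inter h2

lemma hasDerivAt_Sfun (r pm pp qm qp : ℕ) (τ γ : ℤ → ℝ)
    (hC3 : ∀ t : ℂ, 0 < ‖t‖ → ‖t‖ < τ 2 → 0 < t.arg →
      t.arg < Real.pi / r → 0 < (Rfun r pm pp qm qp τ γ t).im)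
    (hr : 2 ≤ r)
    (x : ℝ) (hx0 : 0 < x) (hx2 : x < τ 2)
    (hP : (prodPoly pm pp τ).eval x ≠ 0) (hQ : (prodPoly qm qp γ).eval x ≠ 0) :
    ∃ c : ℝ, 0 ≤ c ∧ HasDerivAt (Sfun r pm pp qm qp τ γ) c x := by
  obtain ⟨c, hc, hg⟩ := hasDerivAt_S r pm pp qm qp τ γ hC3 hr x hx0 hx2 hP hQ
  refine ⟨c, hc, hg.congr_of_eventuallyEq ?_⟩
  refine Filter.eventuallyEq_of_mem ((isOpen_good pm pp qm qp τ γ).mem_nhds ⟨hP, hQ⟩) ?_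
  intro y hy
  show Sfun r pm pp qm qp τ γ y = (Rfun r pm pp qm qp τ γ (y : ℂ)).re
  rw [Rfun_real_eq r pm pp qm qp τ γ y hy.1 hy.2]
  simp

lemma tendsto_S_nhdsGT (r pm pp qm qp : ℕ) (τ γ : ℤ → ℝ)
    (h1mem : (1 : ℤ) ∈ Finset.Ioc (-(pm : ℤ)) (pp : ℤ)) (hτ1 : 0 < τ 1)
    (hPne : ∀ k ∈ Finset.Ioc (-(pm : ℤ)) (pp : ℤ), k ≠ 1 → τ 1 ≠ τ k)
    (hQne : ∀ j ∈ Finset.Ioc (-(qm : ℤ)) (qp : ℤ), τ 1 ≠ γ j) :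
    Filter.Tendsto (Sfun r pm pp qm qp τ γ) (nhdsWithin (τ 1) (Set.Ioi (τ 1)))
      Filter.atBot := by
  classical
  set sP := Finset.Ioc (-(pm : ℤ)) (pp : ℤ)
  set sQ := Finset.Ioc (-(qm : ℤ)) (qp : ℤ)
  have hs1 : Filter.Tendsto (fun x : ℝ => ∑ k ∈ sP.erase 1, x / (x - τ k))
      (nhdsWithin (τ 1) (Set.Ioi (τ 1))) (nhds (∑ k ∈ sP.erase 1, τ 1 / (τ 1 - τ k))) :=
    tendsto_finset_sum _ fun k hk =>
      ((contAt_term (τ k) (τ 1)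
        (hPne k (Finset.mem_of_mem_erase hk) (Finset.ne_of_mem_erase hk))).tendsto).mono_left
        nhdsWithin_le_nhds
  have hs2 : Filter.Tendsto (fun x : ℝ => ∑ j ∈ sQ, x / (x - γ j))
      (nhdsWithin (τ 1) (Set.Ioi (τ 1))) (nhds (∑ j ∈ sQ, τ 1 / (τ 1 - γ j))) :=
    tendsto_finset_sum _ fun j hj =>
      ((contAt_term (γ j) (τ 1) (hQne j hj)).tendsto).mono_left nhdsWithin_le_nhds
  have hA : Filter.Tendsto
      (fun x : ℝ => (r : ℝ) - ∑ k ∈ sP.erase 1, x / (x - τ k) + ∑ j ∈ sQ, x / (x - γ j))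
      (nhdsWithin (τ 1) (Set.Ioi (τ 1))) (nhds
        ((r : ℝ) - (∑ k ∈ sP.erase 1, τ 1 / (τ 1 - τ k)) + ∑ j ∈ sQ, τ 1 / (τ 1 - γ j))) :=
    (tendsto_const_nhds.sub hs1).add hs2
  have hB := tendsto_neg_atTop_atBot.comp (tendsto_main_term_atTop (τ 1) hτ1)
  have hsum := hA.add_atBot hB
  refine hsum.congr fun x => ?_
  show (r : ℝ) - ∑ k ∈ sP.erase 1, x / (x - τ k) + (∑ j ∈ sQ, x / (x - γ j))
      + -(x / (x - τ 1)) = Sfun r pm pp qm qp τ γ x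
  rw [Sfun, ← Finset.add_sum_erase sP (fun k => x / (x - τ k)) h1mem]
  ring

lemma tendsto_S_nhdsLT (r pm pp qm qp : ℕ) (τ γ : ℤ → ℝ)
    (h2mem : (2 : ℤ) ∈ Finset.Ioc (-(pm : ℤ)) (pp : ℤ)) (hτ2 : 0 < τ 2)
    (hQne : ∀ j ∈ Finset.Ioc (-(qm : ℤ)) (qp : ℤ), τ 2 ≠ γ j) :
    Filter.Tendsto (Sfun r pm pp qm qp τ γ) (nhdsWithin (τ 2) (Set.Iio (τ 2)))
      Filter.atTop := by
  classical
  set sP := Finset.Ioc (-(pm : ℤ)) (pp : ℤ) with hsP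
  set sQ := Finset.Ioc (-(qm : ℤ)) (qp : ℤ)
  set M : Finset ℤ := sP.filter (fun k => τ k = τ 2) with hM
  have h2M : (2 : ℤ) ∈ M := by rw [hM]; exact Finset.mem_filter.2 ⟨h2mem, rfl⟩
  have hcard : 0 < (M.card : ℝ) := by
    exact_mod_cast Finset.card_pos.2 ⟨2, h2M⟩
  have hs1 : Filter.Tendsto
      (fun x : ℝ => ∑ k ∈ sP.filter (fun k => ¬ τ k = τ 2), x / (x - τ k))
      (nhdsWithin (τ 2) (Set.Iio (τ 2)))
      (nhds (∑ k ∈ sP.filter (fun k => ¬ τ k = τ 2), τ 2 / (τ 2 - τ k))) :=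
    tendsto_finset_sum _ fun k hk =>
      ((contAt_term (τ k) (τ 2)
        (fun h => (Finset.mem_filter.1 hk).2 h.symm)).tendsto).mono_left nhdsWithin_le_nhds
  have hs2 : Filter.Tendsto (fun x : ℝ => ∑ j ∈ sQ, x / (x - γ j))
      (nhdsWithin (τ 2) (Set.Iio (τ 2))) (nhds (∑ j ∈ sQ, τ 2 / (τ 2 - γ j))) :=
    tendsto_finset_sum _ fun j hj =>
      ((contAt_term (γ j) (τ 2) (hQne j hj)).tendsto).mono_left nhdsWithin_le_nhds
  have hA : Filter.Tendsto
      (fun x : ℝ => (r : ℝ) - ∑ k ∈ sP.filter (fun k => ¬ τ k = τ 2), x / (x - τ k)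
        + ∑ j ∈ sQ, x / (x - γ j))
      (nhdsWithin (τ 2) (Set.Iio (τ 2))) (nhds
        ((r : ℝ) - (∑ k ∈ sP.filter (fun k => ¬ τ k = τ 2), τ 2 / (τ 2 - τ k))
          + ∑ j ∈ sQ, τ 2 / (τ 2 - γ j))) :=
    (tendsto_const_nhds.sub hs1).add hs2
  have hB : Filter.Tendsto (fun x : ℝ => (M.card : ℝ) * (x / (x - τ 2)))
      (nhdsWithin (τ 2) (Set.Iio (τ 2))) Filter.atBot :=
    (tendsto_main_term_atBot (τ 2) hτ2).const_mul_atBot hcard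
  have hB2 := tendsto_neg_atBot_atTop.comp hB
  have hsum := hA.add_atTop hB2
  refine hsum.congr fun x => ?_
  show (r : ℝ) - ∑ k ∈ sP.filter (fun k => ¬ τ k = τ 2), x / (x - τ k)
      + (∑ j ∈ sQ, x / (x - γ j)) + -((M.card : ℝ) * (x / (x - τ 2)))
      = Sfun r pm pp qm qp τ γ x
  have hsplit : ∑ k ∈ sP, x / (x - τ k)
      = (M.card : ℝ) * (x / (x - τ 2)) + ∑ k ∈ sP.filter (fun k => ¬ τ k = τ 2), x / (x - τ k) := by
    rw [← Finset.sum_filter_add_sum_filter_not sP (fun k => τ k = τ 2) (fun k => x / (x - τ k))]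
    congr 1
    rw [show ∑ k ∈ sP.filter (fun k => τ k = τ 2), x / (x - τ k)
        = ∑ _k ∈ M, x / (x - τ 2) from Finset.sum_congr rfl fun k hk => by
          rw [(Finset.mem_filter.1 hk).2]]
    rw [Finset.sum_const, nsmul_eq_mul]
  rw [Sfun, hsplit]
  ring

lemma tendsto_S_zero (r pm pp qm qp : ℕ) (τ γ : ℤ → ℝ)
    (hPne : ∀ k ∈ Finset.Ioc (-(pm : ℤ)) (pp : ℤ), (0:ℝ) ≠ τ k)
    (hQne : ∀ j ∈ Finset.Ioc (-(qm : ℤ)) (qp : ℤ), (0:ℝ) ≠ γ j) :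
    Filter.Tendsto (Sfun r pm pp qm qp τ γ) (nhdsWithin 0 (Set.Ioi 0))
      (nhds (r : ℝ)) := by
  classical
  have hs1 : Filter.Tendsto (fun x : ℝ => ∑ k ∈ Finset.Ioc (-(pm : ℤ)) (pp : ℤ), x / (x - τ k))
      (nhdsWithin 0 (Set.Ioi 0))
      (nhds (∑ k ∈ Finset.Ioc (-(pm : ℤ)) (pp : ℤ), (0:ℝ) / (0 - τ k))) :=
    tendsto_finset_sum _ fun k hk =>
      ((contAt_term (τ k) 0 (hPne k hk)).tendsto).mono_left nhdsWithin_le_nhds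
  have hs2 : Filter.Tendsto (fun x : ℝ => ∑ j ∈ Finset.Ioc (-(qm : ℤ)) (qp : ℤ), x / (x - γ j))
      (nhdsWithin 0 (Set.Ioi 0))
      (nhds (∑ j ∈ Finset.Ioc (-(qm : ℤ)) (qp : ℤ), (0:ℝ) / (0 - γ j))) :=
    tendsto_finset_sum _ fun j hj =>
      ((contAt_term (γ j) 0 (hQne j hj)).tendsto).mono_left nhdsWithin_le_nhds
  have := (tendsto_const_nhds (x := (r:ℝ)).sub hs1).add hs2
  simp only [zero_div, Finset.sum_const_zero, sub_zero, add_zero] at this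
  exact this

theorem stmt1' (r pm pp qm qp : ℕ) (hr : 2 ≤ r) (hpp : 2 ≤ pp) (τ γ : ℤ → ℝ)
    (hτmono : ∀ j k : ℤ, j ∈ Finset.Ioc (-(pm : ℤ)) (pp : ℤ) →
      k ∈ Finset.Ioc (-(pm : ℤ)) (pp : ℤ) → j ≤ k → τ j ≤ τ k)
    (hτneg : ∀ k ∈ Finset.Ioc (-(pm : ℤ)) (pp : ℤ), k ≤ 0 → τ k < 0)
    (hτpos : ∀ k ∈ Finset.Ioc (-(pm : ℤ)) (pp : ℤ), 1 ≤ k → 0 < τ k)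
    (hγneg : ∀ j ∈ Finset.Ioc (-(qm : ℤ)) (qp : ℤ), j ≤ 0 → γ j < 0)
    (hγpos : ∀ j ∈ Finset.Ioc (-(qm : ℤ)) (qp : ℤ), 1 ≤ j → 0 < γ j)
    (hC1b : ∀ x : ℝ, 0 < x → x ≤ τ 2 →
      ((Finset.Ioc (-(qm : ℤ)) (qp : ℤ)).filter fun k => 0 < γ k ∧ γ k ≤ x).card = 0)
    (hC3 : ∀ t : ℂ, 0 < ‖t‖ → ‖t‖ < τ 2 → 0 < t.arg →
      t.arg < Real.pi / r → 0 < (Rfun r pm pp qm qp τ γ t).im) :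
    ∃ ta : ℝ, 0 < ta ∧ PRfun r pm pp qm qp τ γ (ta : ℂ) = 0 ∧
      (∀ x : ℝ, 0 < x → PRfun r pm pp qm qp τ γ (x : ℂ) = 0 → ta ≤ x) ∧
      (τ 1 < τ 2 → τ 1 < ta ∧ ta < τ 2 ∧
        ∀ x : ℝ, τ 1 < x → x < τ 2 → PRfun r pm pp qm qp τ γ (x : ℂ) = 0 → x = ta) ∧
      (τ 1 = τ 2 → ta = τ 1) := by
  classical
  have hpm0 : (0:ℤ) ≤ (pm:ℤ) := Int.natCast_nonneg pm
  have hpp2 : (2:ℤ) ≤ (pp:ℤ) := by exact_mod_cast hpp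
  have h1mem : (1:ℤ) ∈ Finset.Ioc (-(pm : ℤ)) (pp : ℤ) := Finset.mem_Ioc.2 (by omega)
  have h2mem : (2:ℤ) ∈ Finset.Ioc (-(pm : ℤ)) (pp : ℤ) := Finset.mem_Ioc.2 (by omega)
  have hτ1 : 0 < τ 1 := hτpos 1 h1mem le_rfl
  have hτ2 : 0 < τ 2 := hτpos 2 h2mem (by omega)
  have hτ12 : τ 1 ≤ τ 2 := hτmono 1 2 h1mem h2mem (by omega)
  set S := Sfun r pm pp qm qp τ γ with hS
  -- location of the roots of Q
  have hQroot : ∀ j ∈ Finset.Ioc (-(qm : ℤ)) (qp : ℤ), γ j < 0 ∨ τ 2 < γ j := by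
    intro j hj
    by_contra h
    push_neg at h
    have h0 := hC1b (τ 2) hτ2 le_rfl
    rw [Finset.card_eq_zero, Finset.filter_eq_empty_iff] at h0
    have hj1 : 0 < γ j := by
      rcases le_or_gt j 0 with h' | h'
      · exact absurd (hγneg j hj h') (not_lt.2 h.1)
      · exact hγpos j hj h'
    exact h0 hj ⟨hj1, h.2⟩
  -- nonvanishing of Q on (0, τ 2]
  have hQne : ∀ x : ℝ, 0 < x → x ≤ τ 2 → (prodPoly qm qp γ).eval x ≠ 0 := by
    intro x hx0 hx2
    rw [eval_prodPoly]
    refine Finset.prod_ne_zero_iff.2 fun j hj => sub_ne_zero.2 ?_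
    rcases hQroot j hj with h | h
    · exact ne_of_gt (lt_of_lt_of_le' hx0 h.le)
    · exact ne_of_lt (lt_of_le_of_lt hx2 h)
  -- nonvanishing of P on (0, τ 2) away from τ 1
  have hPgt : ∀ k ∈ Finset.Ioc (-(pm : ℤ)) (pp : ℤ), 2 ≤ k → τ 2 ≤ τ k :=
    fun k hk h2k => hτmono 2 k h2mem hk h2k
  have hPne' : ∀ x : ℝ, 0 < x → x < τ 2 → x ≠ τ 1 → (prodPoly pm pp τ).eval x ≠ 0 := by
    intro x hx0 hx2 hx1
    rw [eval_prodPoly]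
    refine Finset.prod_ne_zero_iff.2 fun k hk => sub_ne_zero.2 ?_
    rcases le_or_gt k 0 with h' | h'
    · exact ne_of_gt (lt_trans (hτneg k hk h') hx0)
    · rcases lt_or_ge k 2 with h'' | h''
      · have : k = 1 := by omega
        rw [this]; exact hx1
      · exact ne_of_lt (lt_of_lt_of_le hx2 (hPgt k hk h''))
  have hτ0 : ∀ k ∈ Finset.Ioc (-(pm : ℤ)) (pp : ℤ), (0:ℝ) ≠ τ k := by
    intro k hk
    rcases le_or_gt k 0 with h' | h'
    · exact ne_of_gt (hτneg k hk h')
    · exact ne_of_lt (hτpos k hk h')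
  have hγ0 : ∀ j ∈ Finset.Ioc (-(qm : ℤ)) (qp : ℤ), (0:ℝ) ≠ γ j := by
    intro j hj
    rcases le_or_gt j 0 with h' | h'
    · exact ne_of_gt (hγneg j hj h')
    · exact ne_of_lt (hγpos j hj h')
  have hP0 : (prodPoly pm pp τ).eval 0 ≠ 0 := by
    rw [eval_prodPoly]
    exact Finset.prod_ne_zero_iff.2 fun k hk => sub_ne_zero.2 (hτ0 k hk)
  have hQ0 : (prodPoly qm qp γ).eval 0 ≠ 0 := by
    rw [eval_prodPoly]
    exact Finset.prod_ne_zero_iff.2 fun j hj => sub_ne_zero.2 (hγ0 j hj)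
  have hQneτ1 : ∀ j ∈ Finset.Ioc (-(qm : ℤ)) (qp : ℤ), τ 1 ≠ γ j := by
    intro j hj
    rcases hQroot j hj with h | h
    · exact ne_of_gt (lt_trans h hτ1)
    · exact ne_of_lt (lt_of_le_of_lt hτ12 h)
  have hQneτ2 : ∀ j ∈ Finset.Ioc (-(qm : ℤ)) (qp : ℤ), τ 2 ≠ γ j := by
    intro j hj
    rcases hQroot j hj with h | h
    · exact ne_of_gt (lt_trans h hτ2)
    · exact ne_of_lt h
  -- monotonicity and continuity machinery
  have hSmono : ∀ a b : ℝ, 0 ≤ a → b ≤ τ 2 →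
      (∀ y ∈ Set.Ioo a b, (prodPoly pm pp τ).eval y ≠ 0) →
      MonotoneOn S (Set.Ioo a b) ∧ ContinuousOn S (Set.Ioo a b) := by
    intro a b ha hb hroot
    have hder : ∀ y ∈ Set.Ioo a b, ∃ c : ℝ, 0 ≤ c ∧ HasDerivAt S c y := by
      intro y hy
      have hy0 : 0 < y := lt_of_le_of_lt ha hy.1
      have hy2 : y < τ 2 := lt_of_lt_of_le hy.2 hb
      exact hasDerivAt_Sfun r pm pp qm qp τ γ hC3 hr y hy0 hy2 (hroot y hy)
        (hQne y hy0 hy2.le)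
    have hdiff : DifferentiableOn ℝ S (Set.Ioo a b) := fun y hy =>
      ((hder y hy).choose_spec.2.differentiableAt).differentiableWithinAt
    have hcont : ContinuousOn S (Set.Ioo a b) := hdiff.continuousOn
    refine ⟨monotoneOn_of_deriv_nonneg (convex_Ioo a b) hcont (by rwa [interior_Ioo]) ?_, hcont⟩
    intro y hy
    rw [interior_Ioo] at hy
    obtain ⟨c, hc, hD⟩ := hder y hy
    rw [hD.deriv]
    exact hc
  -- positivity of S on (0, τ 1)
  have hSpos : ∀ x ∈ Set.Ioo (0:ℝ) (τ 1), (r:ℝ) ≤ S x := by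
    intro x hx
    have hroot : ∀ y ∈ Set.Ioo (0:ℝ) (τ 1), (prodPoly pm pp τ).eval y ≠ 0 := fun y hy =>
      hPne' y hy.1 (lt_of_lt_of_le hy.2 hτ12) (ne_of_lt hy.2)
    obtain ⟨hmono, -⟩ := hSmono 0 (τ 1) le_rfl hτ12 hroot
    have hL3 := tendsto_S_zero r pm pp qm qp τ γ hτ0 hγ0
    refine le_of_tendsto hL3 ?_
    filter_upwards [Ioo_mem_nhdsGT_of_mem (Set.left_mem_Ico.2 hx.1)] with y hy
    exact hmono ⟨hy.1, lt_trans hy.2 hx.2⟩ hx hy.2.le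
  -- zero characterization
  have hPR0 : ∀ x : ℝ, (prodPoly pm pp τ).eval x ≠ 0 → (prodPoly qm qp γ).eval x ≠ 0 →
      (PRfun r pm pp qm qp τ γ (x : ℂ) = 0 ↔ S x = 0) := by
    intro x hP hQ
    rw [PRfun_real_eq, Complex.ofReal_eq_zero, PRre_eq r pm pp qm qp τ γ x hP hQ,
      mul_eq_zero]
    constructor
    · rintro (h | h)
      · exact absurd h hP
      · exact h
    · exact fun h => Or.inr h
  -- the auxiliary polynomial is nonzero at 0
  have hN0 : (Npoly r pm pp qm qp τ γ).eval 0 ≠ 0 := by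
    have : (Npoly r pm pp qm qp τ γ).eval 0
        = (r : ℝ) * (prodPoly pm pp τ).eval 0 * (prodPoly qm qp γ).eval 0 := by
      simp [Npoly]
    rw [this]
    have hr0 : (r:ℝ) ≠ 0 := by positivity
    exact mul_ne_zero (mul_ne_zero hr0 hP0) hQ0
  -- S cannot vanish identically on a nontrivial interval
  have hflat : ∀ u v : ℝ, 0 < u → v ≤ τ 2 → u < v →
      (∀ y ∈ Set.Icc u v, (prodPoly pm pp τ).eval y ≠ 0) →
      (∀ y ∈ Set.Icc u v, S y = 0) → False := by
    intro u v hu hv huv hroot hzero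
    have hNzero : ∀ y ∈ Set.Icc u v, (Npoly r pm pp qm qp τ γ).eval y = 0 := by
      intro y hy
      have hy0 : 0 < y := lt_of_lt_of_le hu hy.1
      have hy2 : y ≤ τ 2 := le_trans hy.2 hv
      rw [Npoly_eval r pm pp qm qp τ γ y (hroot y hy) (hQne y hy0 hy2), ← hS, hzero y hy,
        mul_zero]
    have hNz : Npoly r pm pp qm qp τ γ = 0 := by
      apply Polynomial.eq_zero_of_infinite_isRoot
      apply Set.Infinite.mono (s := Set.Icc u v)
      · exact fun y hy => hNzero y hy
      · exact Set.Icc_infinite huv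
    rw [hNz] at hN0
    simp at hN0
  rcases eq_or_lt_of_le hτ12 with heq | hlt
  · -- case τ 1 = τ 2
    refine ⟨τ 1, hτ1, ?_, ?_, fun h => absurd heq (ne_of_lt h), fun _ => rfl⟩
    · -- PRfun vanishes at τ 1
      have hP1 : (prodPoly pm pp τ).eval (τ 1) = 0 := by
        rw [eval_prodPoly]
        exact Finset.prod_eq_zero h1mem (by simp)
      have hP'1 : (Polynomial.derivative (prodPoly pm pp τ)).eval (τ 1) = 0 := by
        rw [eval_deriv_prodPoly]
        refine Finset.sum_eq_zero fun k hk => ?_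
        rcases eq_or_ne k 1 with rfl | hk1
        · refine Finset.prod_eq_zero (Finset.mem_erase.2 ⟨by norm_num, h2mem⟩) ?_
          rw [← heq]; ring
        · exact Finset.prod_eq_zero (Finset.mem_erase.2 ⟨(Ne.symm hk1), h1mem⟩) (by simp)
      rw [PRfun_real_eq, hP1, hP'1]
      norm_num
    · -- minimality
      intro x hx0 hPRx
      by_contra hxle
      push_neg at hxle
      have hx1 : x < τ 1 := hxle
      have hPx : (prodPoly pm pp τ).eval x ≠ 0 :=
        hPne' x hx0 (lt_of_lt_of_le hx1 hτ12) (ne_of_lt hx1)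
      have hQx : (prodPoly qm qp γ).eval x ≠ 0 :=
        hQne x hx0 (le_trans hx1.le hτ12)
      have hSx : S x = 0 := (hPR0 x hPx hQx).1 hPRx
      have := hSpos x ⟨hx0, hx1⟩
      rw [hSx] at this
      have : (0:ℝ) < r := by positivity
      linarith [hSpos x ⟨hx0, hx1⟩, hSx]
  · -- case τ 1 < τ 2
    have hPneTop : ∀ k ∈ Finset.Ioc (-(pm : ℤ)) (pp : ℤ), k ≠ 1 → τ 1 ≠ τ k := by
      intro k hk hk1
      rcases le_or_gt k 0 with h' | h'
      · exact ne_of_gt (lt_trans (hτneg k hk h') hτ1)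
      · have h2k : 2 ≤ k := by omega
        exact ne_of_lt (lt_of_lt_of_le hlt (hPgt k hk h2k))
    have hrootI : ∀ y ∈ Set.Ioo (τ 1) (τ 2), (prodPoly pm pp τ).eval y ≠ 0 := fun y hy =>
      hPne' y (lt_trans hτ1 hy.1) hy.2 (ne_of_gt hy.1)
    obtain ⟨hmono, hcont⟩ := hSmono (τ 1) (τ 2) hτ1.le le_rfl hrootI
    have hL1 := tendsto_S_nhdsGT r pm pp qm qp τ γ h1mem hτ1 hPneTop hQneτ1
    have hL2 := tendsto_S_nhdsLT r pm pp qm qp τ γ h2mem hτ2 hQneτ2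
    -- a point with negative value
    have hmem1 : ∀ᶠ y in nhdsWithin (τ 1) (Set.Ioi (τ 1)), y ∈ Set.Ioo (τ 1) (τ 2) :=
      Filter.eventually_of_mem (Ioo_mem_nhdsGT_of_mem (Set.left_mem_Ico.2 hlt)) fun y hy => hy
    obtain ⟨x1, hSx1, hx1m⟩ :=
      ((hL1.eventually (Filter.eventually_le_atBot (-1))).and hmem1).exists
    have hmem2 : ∀ᶠ y in nhdsWithin (τ 2) (Set.Iio (τ 2)), y ∈ Set.Ioo (τ 1) (τ 2) :=
      Filter.eventually_of_mem (Ioo_mem_nhdsLT_of_mem (Set.right_mem_Ioc.2 hlt)) fun y hy => hy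
    obtain ⟨x2, hSx2, hx2m⟩ :=
      ((hL2.eventually (Filter.eventually_ge_atTop 1)).and hmem2).exists
    have hSx1' : S x1 < 0 := lt_of_le_of_lt hSx1 (by norm_num)
    have hSx2' : 0 < S x2 := lt_of_lt_of_le one_pos hSx2
    have hx12 : x1 < x2 := by
      by_contra h
      push_neg at h
      have := hmono hx2m hx1m h
      linarith
    have hsub : Set.Icc x1 x2 ⊆ Set.Ioo (τ 1) (τ 2) := fun y hy =>
      ⟨lt_of_lt_of_le hx1m.1 hy.1, lt_of_le_of_lt hy.2 hx2m.2⟩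
    obtain ⟨ta, htam, hSta⟩ :=
      intermediate_value_Icc hx12.le (hcont.mono hsub) ⟨hSx1'.le, hSx2'.le⟩
    have htaI : ta ∈ Set.Ioo (τ 1) (τ 2) := hsub htam
    have hta0 : 0 < ta := lt_trans hτ1 htaI.1
    have huniq : ∀ x ∈ Set.Ioo (τ 1) (τ 2), S x = 0 → x = ta := by
      intro x hx hSx
      rcases lt_trichotomy x ta with h | h | h
      · exfalso
        refine hflat x ta (lt_trans hτ1 hx.1) htaI.2.le h ?_ ?_
        · intro y hy
          exact hrootI y ⟨lt_of_lt_of_le hx.1 hy.1, lt_of_le_of_lt hy.2 htaI.2⟩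
        · intro y hy
          have hyI : y ∈ Set.Ioo (τ 1) (τ 2) :=
            ⟨lt_of_lt_of_le hx.1 hy.1, lt_of_le_of_lt hy.2 htaI.2⟩
          have h1 : S y ≤ S ta := hmono hyI htaI hy.2
          have h2 : S x ≤ S y := hmono hx hyI hy.1
          rw [hSx] at h2
          rw [hSta] at h1
          linarith
      · exact h
      · exfalso
        refine hflat ta x hta0 hx.2.le h ?_ ?_
        · intro y hy
          exact hrootI y ⟨lt_of_lt_of_le htaI.1 hy.1, lt_of_le_of_lt hy.2 hx.2⟩
        · intro y hy
          have hyI : y ∈ Set.Ioo (τ 1) (τ 2) :=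
            ⟨lt_of_lt_of_le htaI.1 hy.1, lt_of_le_of_lt hy.2 hx.2⟩
          have h1 : S y ≤ S x := hmono hyI hx hy.2
          have h2 : S ta ≤ S y := hmono htaI hyI hy.1
          rw [hSx] at h1
          rw [hSta] at h2
          linarith
    have hr2 : (2:ℝ) ≤ (r:ℝ) := by exact_mod_cast hr
    refine ⟨ta, hta0, ?_, ?_, fun _ => ⟨htaI.1, htaI.2, ?_⟩, fun h => absurd h (ne_of_lt hlt)⟩
    · exact (hPR0 ta (hrootI ta htaI) (hQne ta hta0 htaI.2.le)).2 hSta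
    · intro x hx0 hPRx
      rcases lt_or_ge x (τ 2) with hx2' | hx2'
      · rcases lt_trichotomy x (τ 1) with h | h | h
        · exfalso
          have hSx : S x = 0 :=
            (hPR0 x (hPne' x hx0 hx2' (ne_of_lt h)) (hQne x hx0 hx2'.le)).1 hPRx
          have := hSpos x ⟨hx0, h⟩
          linarith
        · exfalso
          rw [h] at hPRx
          have hP1 : (prodPoly pm pp τ).eval (τ 1) = 0 := by
            rw [eval_prodPoly]
            exact Finset.prod_eq_zero h1mem (by simp)
          have hP'1ne : (Polynomial.derivative (prodPoly pm pp τ)).eval (τ 1) ≠ 0 := by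
            rw [eval_deriv_prodPoly, Finset.sum_eq_single 1
              (fun k hk hk1 =>
                Finset.prod_eq_zero (Finset.mem_erase.2 ⟨Ne.symm hk1, h1mem⟩) (by simp))
              (fun hn => absurd h1mem hn)]
            exact Finset.prod_ne_zero_iff.2 fun j hj => sub_ne_zero.2
              (hPneTop j (Finset.mem_of_mem_erase hj) (Finset.ne_of_mem_erase hj))
          rw [PRfun_real_eq, hP1, Complex.ofReal_eq_zero] at hPRx
          simp only [mul_zero, zero_mul, zero_div, add_zero, zero_sub, neg_eq_zero,
            mul_eq_zero] at hPRx
          rcases hPRx with h' | h'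
          · exact absurd h' (ne_of_gt hτ1)
          · exact hP'1ne h'
        · have := huniq x ⟨h, hx2'⟩
            ((hPR0 x (hrootI x ⟨h, hx2'⟩) (hQne x hx0 hx2'.le)).1 hPRx)
          rw [this]
      · exact le_trans htaI.2.le hx2'
    · intro x h1 h2 hPRx
      exact huniq x ⟨h1, h2⟩
        ((hPR0 x (hrootI x ⟨h1, h2⟩) (hQne x (lt_trans hτ1 h1) h2.le)).1 hPRx)


theorem stmt1 (r pm pp qm qp : ℕ) (hr : 2 ≤ r) (hpp : 2 ≤ pp) (τ γ : ℤ → ℝ)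
    (hτmono : ∀ j k : ℤ, j ∈ Finset.Ioc (-(pm : ℤ)) (pp : ℤ) →
      k ∈ Finset.Ioc (-(pm : ℤ)) (pp : ℤ) → j ≤ k → τ j ≤ τ k)
    (hτneg : ∀ k ∈ Finset.Ioc (-(pm : ℤ)) (pp : ℤ), k ≤ 0 → τ k < 0)
    (hτpos : ∀ k ∈ Finset.Ioc (-(pm : ℤ)) (pp : ℤ), 1 ≤ k → 0 < τ k)
    (hγmono : ∀ j k : ℤ, j ∈ Finset.Ioc (-(qm : ℤ)) (qp : ℤ) →
      k ∈ Finset.Ioc (-(qm : ℤ)) (qp : ℤ) → j ≤ k → γ j ≤ γ k)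
    (hγneg : ∀ j ∈ Finset.Ioc (-(qm : ℤ)) (qp : ℤ), j ≤ 0 → γ j < 0)
    (hγpos : ∀ j ∈ Finset.Ioc (-(qm : ℤ)) (qp : ℤ), 1 ≤ j → 0 < γ j)
    (hC1a : ∀ x : ℝ, τ 2 ≤ x → nPos qm qp γ x + 2 ≤ nPos pm pp τ x)
    (hC1b : ∀ x : ℝ, 0 < x → x ≤ τ 2 → nPos qm qp γ x = 0)
    (hC3 : ∀ t : ℂ, 0 < ‖t‖ → ‖t‖ < τ 2 → 0 < t.arg →
      t.arg < Real.pi / r → 0 < (Rfun r pm pp qm qp τ γ t).im)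
 :
    ∃ ta : ℝ, 0 < ta ∧ PRfun r pm pp qm qp τ γ (ta : ℂ) = 0 ∧
      (∀ x : ℝ, 0 < x → PRfun r pm pp qm qp τ γ (x : ℂ) = 0 → ta ≤ x) ∧
      (τ 1 < τ 2 → τ 1 < ta ∧ ta < τ 2 ∧
        ∀ x : ℝ, τ 1 < x → x < τ 2 → PRfun r pm pp qm qp τ γ (x : ℂ) = 0 → x = ta) ∧
      (τ 1 = τ 2 → ta = τ 1) := by
  exact stmt1' r pm pp qm qp hr hpp τ γ hτmono hτneg hτpos hγneg hγpos
    (fun x hx h2 => hC1b x hx h2) hC3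
end
end

section
/- Assume (C1) n_+^P(x)-n_+^Q(x) ≥ 2 for all x ≥ τ_2 and n_+^Q(x)=0 for all x ∈ (0,τ_2] (in particular p_+ ≥ 2), and (C2) n_-^Q(x)-n_-^P(x) ≥ 0 for all x<0. If t = τe^{iθ} with τ>0, 0<θ<π/r, and Σ_{-p_-<k≤p_+} θ_k(t) - Σ_{-q_-<j≤q_+} η_j(t) - rθ = (p_+-q_+-1)π, then τ < τ_2. -/
noncomputable section

section auxlemmas
open Complex

lemma absEq (z : ℂ) : ‖z‖ = Real.sqrt (z.re^2 + z.im^2) := by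
  rw [Complex.norm_def, Complex.normSq_apply]; ring_nf

lemma arccos_anti {x y : ℝ} (h : x ≤ y) : Real.arccos y ≤ Real.arccos x := by
  rw [Real.arccos_eq_pi_div_two_sub_arcsin, Real.arccos_eq_pi_div_two_sub_arcsin]
  have := Real.monotone_arcsin h; linarith

lemma ratio_mono {x₁ x₂ y : ℝ} (hy : 0 < y) (h : x₁ ≤ x₂) :
    x₁ / Real.sqrt (x₁^2 + y^2) ≤ x₂ / Real.sqrt (x₂^2 + y^2) := by
  have s₁ : (0:ℝ) < Real.sqrt (x₁^2 + y^2) := Real.sqrt_pos.2 (by positivity)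
  have s₂ : (0:ℝ) < Real.sqrt (x₂^2 + y^2) := Real.sqrt_pos.2 (by positivity)
  rw [div_le_div_iff₀ s₁ s₂]
  have e₁ : Real.sqrt (x₁^2 + y^2) ^ 2 = x₁^2 + y^2 := Real.sq_sqrt (by positivity)
  have e₂ : Real.sqrt (x₂^2 + y^2) ^ 2 = x₂^2 + y^2 := Real.sq_sqrt (by positivity)
  rcases le_or_gt x₁ 0 with h1 | h1
  · rcases le_or_gt 0 x₂ with h2 | h2
    · exact le_trans (mul_nonpos_of_nonpos_of_nonneg h1 s₂.le) (mul_nonneg h2 s₁.le)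
    · -- both negative
      have hx₁ : x₁ < 0 := lt_of_le_of_lt h h2
      have e3 : (-x₂) * Real.sqrt (x₁^2 + y^2) = Real.sqrt (x₂^2 * (x₁^2 + y^2)) := by
        rw [Real.sqrt_mul (sq_nonneg x₂), Real.sqrt_sq_eq_abs, abs_of_neg h2]
      have e4 : (-x₁) * Real.sqrt (x₂^2 + y^2) = Real.sqrt (x₁^2 * (x₂^2 + y^2)) := by
        rw [Real.sqrt_mul (sq_nonneg x₁), Real.sqrt_sq_eq_abs, abs_of_neg hx₁]
      have : (-x₂) * Real.sqrt (x₁^2 + y^2) ≤ (-x₁) * Real.sqrt (x₂^2 + y^2) := by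
        rw [e3, e4]; apply Real.sqrt_le_sqrt
        nlinarith [mul_self_le_mul_self (neg_nonneg.2 h2.le) (by linarith : -x₂ ≤ -x₁), sq_nonneg y]
      linarith
  · -- both positive
    have hx₂ : 0 < x₂ := lt_of_lt_of_le h1 h
    have e3 : x₁ * Real.sqrt (x₂^2 + y^2) = Real.sqrt (x₁^2 * (x₂^2 + y^2)) := by
      rw [Real.sqrt_mul (sq_nonneg x₁), Real.sqrt_sq_eq_abs, abs_of_pos h1]
    have e4 : x₂ * Real.sqrt (x₁^2 + y^2) = Real.sqrt (x₂^2 * (x₁^2 + y^2)) := by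
      rw [Real.sqrt_mul (sq_nonneg x₂), Real.sqrt_sq_eq_abs, abs_of_pos hx₂]
    rw [e3, e4]; apply Real.sqrt_le_sqrt
    nlinarith [mul_self_le_mul_self h1.le h, sq_nonneg y]

lemma argAnti {t : ℂ} (ht : 0 < t.im) {a b : ℝ} (h : a ≤ b) :
    (t - (a:ℂ)).arg ≤ (t - (b:ℂ)).arg := by
  have ima : (t - (a:ℂ)).im = t.im := by simp
  have imb : (t - (b:ℂ)).im = t.im := by simp
  rw [arg_of_im_pos (by rw [ima]; exact ht), arg_of_im_pos (by rw [imb]; exact ht),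
    absEq, absEq, ima, imb]
  apply arccos_anti
  have rea : (t - (a:ℂ)).re = t.re - a := by simp
  have reb : (t - (b:ℂ)).re = t.re - b := by simp
  rw [rea, reb]
  exact ratio_mono ht (by linarith)

lemma argPosLtPi {z : ℂ} (hz : 0 < z.im) : 0 < z.arg ∧ z.arg < Real.pi := by
  constructor
  · rcases lt_or_eq_of_le (Complex.arg_nonneg_iff.2 hz.le) with h | h
    · exact h
    · exfalso; have := Complex.arg_eq_zero_iff.1 h.symm; linarith [this.2]
  · rcases lt_or_eq_of_le (Complex.arg_le_pi z) with h | h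
    · exact h
    · exfalso; have := Complex.arg_eq_pi_iff.1 h; linarith [this.2]

lemma halfAngle {τv θ a : ℝ} (hτv : 0 < τv) (hθ0 : 0 < θ) (hθ1 : θ < Real.pi/2)
    (ha0 : 0 < a) (ha : a ≤ τv) :
    ((τv:ℂ) * Complex.exp ((θ:ℂ) * Complex.I) - (a:ℂ)).arg ≤ (Real.pi + θ)/2 := by
  set z : ℂ := (τv:ℂ) * Complex.exp ((θ:ℂ) * Complex.I) - (a:ℂ) with hz
  have hre : z.re = τv * Real.cos θ - a := by
    simp [hz, Complex.mul_re, Complex.exp_ofReal_mul_I_re, Complex.exp_ofReal_mul_I_im]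
  have him : z.im = τv * Real.sin θ := by
    simp [hz, Complex.mul_im, Complex.exp_ofReal_mul_I_re, Complex.exp_ofReal_mul_I_im]
  have hpi := Real.pi_pos
  have hsin : 0 < Real.sin θ := Real.sin_pos_of_pos_of_lt_pi hθ0 (by linarith)
  have hzim : 0 < z.im := by rw [him]; positivity
  rw [arg_of_im_pos hzim, absEq]
  have harc : (Real.pi + θ)/2 = Real.arccos (Real.cos ((Real.pi + θ)/2)) := by
    rw [Real.arccos_cos (by linarith) (by linarith)]
  rw [harc]
  apply arccos_anti
  have hcos : Real.cos ((Real.pi + θ)/2) = -Real.sin (θ/2) := by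
    have : (Real.pi + θ)/2 = θ/2 + Real.pi/2 := by ring
    rw [this, Real.cos_add_pi_div_two]
  rw [hcos]
  -- need -sin(θ/2) ≤ z.re / sqrt (z.re^2 + z.im^2)
  have hM : (0:ℝ) < Real.sqrt (z.re^2 + z.im^2) := Real.sqrt_pos.2 (by positivity)
  rw [le_div_iff₀ hM]
  have hs : 0 ≤ Real.sin (θ/2) := Real.sin_nonneg_of_nonneg_of_le_pi (by linarith) (by linarith)
  rcases le_or_gt 0 z.re with h | h
  · nlinarith [mul_nonneg hs hM.le]
  · -- z.re < 0 : square the inequality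
    have hsq : (Real.sin (θ/2))^2 * (z.re^2 + z.im^2) ≥ z.re^2 := by
      have hs2 : (Real.sin (θ/2))^2 = (1 - Real.cos θ)/2 := by
        have h1 := Real.sin_sq_add_cos_sq (θ/2)
        have h2 := Real.cos_sq (θ/2)
        rw [show 2*(θ/2) = θ by ring] at h2
        linarith
      have hc1 : Real.cos θ ≤ 1 := Real.cos_le_one θ
      have hc0 : 0 < Real.cos θ := Real.cos_pos_of_mem_Ioo ⟨by linarith, hθ1⟩
      have hkey : 0 ≤ (τv - a) * (τv + a - 2 * Real.cos θ * τv) := by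
        apply mul_nonneg (by linarith)
        have : τv * Real.cos θ < a := by rw [hre] at h; linarith
        nlinarith
      have hsin2 : Real.sin θ ^ 2 = 1 - Real.cos θ ^ 2 := by
        have := Real.sin_sq_add_cos_sq θ; linarith
      have hsub : (τv * Real.sin θ)^2 = τv^2 * (1 - Real.cos θ^2) := by
        rw [mul_pow, hsin2]
      rw [hre, him, hs2, hsub]
      nlinarith [mul_nonneg (by linarith : (0:ℝ) ≤ (1 + Real.cos θ)/2) hkey]
    have hMsq : Real.sqrt (z.re^2 + z.im^2) ^ 2 = z.re^2 + z.im^2 := Real.sq_sqrt (by positivity)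
    nlinarith [mul_nonneg hs hM.le]


section counting
variable {pm pp qm qp : ℕ} {τ γ : ℤ → ℝ}

lemma negPair
    (hτmono : ∀ j k : ℤ, j ∈ Finset.Ioc (-(pm : ℤ)) (pp : ℤ) →
      k ∈ Finset.Ioc (-(pm : ℤ)) (pp : ℤ) → j ≤ k → τ j ≤ τ k)
    (hτneg : ∀ k ∈ Finset.Ioc (-(pm : ℤ)) (pp : ℤ), k ≤ 0 → τ k < 0)
    (hγmono : ∀ j k : ℤ, j ∈ Finset.Ioc (-(qm : ℤ)) (qp : ℤ) →
      k ∈ Finset.Ioc (-(qm : ℤ)) (qp : ℤ) → j ≤ k → γ j ≤ γ k)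
    (hγpos : ∀ j ∈ Finset.Ioc (-(qm : ℤ)) (qp : ℤ), 1 ≤ j → 0 < γ j)
    (hC2 : ∀ x : ℝ, x < 0 → nNeg pm pp τ x ≤ nNeg qm qp γ x)
    {k : ℤ} (hk1 : -(pm:ℤ) < k) (hk2 : k ≤ 0) : τ k ≤ γ k := by
  have hkmem : k ∈ Finset.Ioc (-(pm:ℤ)) (pp:ℤ) :=
    Finset.mem_Ioc.2 ⟨hk1, le_trans hk2 (by positivity)⟩
  have hx : τ k < 0 := hτneg k hkmem hk2
  have hsub : Finset.Ioc (k-1) 0 ⊆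
      (Finset.Ioc (-(pm:ℤ)) (pp:ℤ)).filter fun m => τ k ≤ τ m ∧ τ m < 0 := by
    intro m hm
    rw [Finset.mem_Ioc] at hm
    have hm1 : k ≤ m := by omega
    have hmmem : m ∈ Finset.Ioc (-(pm:ℤ)) (pp:ℤ) :=
      Finset.mem_Ioc.2 ⟨lt_of_lt_of_le hk1 hm1, le_trans hm.2 (by positivity)⟩
    exact Finset.mem_filter.2 ⟨hmmem, hτmono k m hkmem hmmem hm1, hτneg m hmmem hm.2⟩
  have hcard : (1 - k).toNat ≤ nNeg pm pp τ (τ k) := by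
    have := Finset.card_le_card hsub
    rwa [Int.card_Ioc, show (0 - (k-1)) = 1 - k by ring] at this
  have hQ : (1 - k).toNat ≤ nNeg qm qp γ (τ k) := le_trans hcard (hC2 (τ k) hx)
  by_cases hex : ∃ j ∈ (Finset.Ioc (-(qm:ℤ)) (qp:ℤ)).filter
      (fun j => τ k ≤ γ j ∧ γ j < 0), j ≤ k
  · obtain ⟨j, hj, hjk⟩ := hex
    obtain ⟨hjmem, hjτ, hjneg⟩ := Finset.mem_filter.1 hj
    have hkmem' : k ∈ Finset.Ioc (-(qm:ℤ)) (qp:ℤ) := by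
      rw [Finset.mem_Ioc] at hjmem ⊢
      constructor
      · omega
      · exact le_trans hk2 (by positivity)
    exact le_trans hjτ (hγmono j k hjmem hkmem' hjk)
  · push_neg at hex
    have hsubQ : (Finset.Ioc (-(qm:ℤ)) (qp:ℤ)).filter (fun j => τ k ≤ γ j ∧ γ j < 0)
        ⊆ Finset.Ioc k 0 := by
      intro j hj
      obtain ⟨hjmem, _, hjneg⟩ := Finset.mem_filter.1 hj
      rw [Finset.mem_Ioc]
      refine ⟨hex j hj, ?_⟩
      by_contra hc
      exact absurd (hγpos j hjmem (by omega)) (not_lt.2 hjneg.le)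
    have := Finset.card_le_card hsubQ
    rw [Int.card_Ioc] at this
    have : nNeg qm qp γ (τ k) ≤ (0 - k).toNat := this
    omega

lemma pmLEqm
    (hτmono : ∀ j k : ℤ, j ∈ Finset.Ioc (-(pm : ℤ)) (pp : ℤ) →
      k ∈ Finset.Ioc (-(pm : ℤ)) (pp : ℤ) → j ≤ k → τ j ≤ τ k)
    (hτneg : ∀ k ∈ Finset.Ioc (-(pm : ℤ)) (pp : ℤ), k ≤ 0 → τ k < 0)
    (hγpos : ∀ j ∈ Finset.Ioc (-(qm : ℤ)) (qp : ℤ), 1 ≤ j → 0 < γ j)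
    (hC2 : ∀ x : ℝ, x < 0 → nNeg pm pp τ x ≤ nNeg qm qp γ x) : pm ≤ qm := by
  rcases Nat.eq_zero_or_pos pm with h | h
  · omega
  have hk1 : -(pm:ℤ) < 1 - pm := by omega
  have hkmem : (1 - pm : ℤ) ∈ Finset.Ioc (-(pm:ℤ)) (pp:ℤ) :=
    Finset.mem_Ioc.2 ⟨hk1, by omega⟩
  have hx : τ (1 - pm) < 0 := hτneg _ hkmem (by omega)
  have hsub : Finset.Ioc (-(pm:ℤ)) 0 ⊆
      (Finset.Ioc (-(pm:ℤ)) (pp:ℤ)).filter fun m => τ (1-pm) ≤ τ m ∧ τ m < 0 := by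
    intro m hm
    rw [Finset.mem_Ioc] at hm
    have hmmem : m ∈ Finset.Ioc (-(pm:ℤ)) (pp:ℤ) := Finset.mem_Ioc.2 ⟨hm.1, by omega⟩
    exact Finset.mem_filter.2 ⟨hmmem, hτmono _ m hkmem hmmem (by omega), hτneg m hmmem hm.2⟩
  have hcard : pm ≤ nNeg pm pp τ (τ (1-pm)) := by
    have := Finset.card_le_card hsub
    rwa [Int.card_Ioc, show (0 - -(pm:ℤ)) = pm by ring, Int.toNat_natCast] at this
  have hQ := le_trans hcard (hC2 _ hx)
  have hsubQ : (Finset.Ioc (-(qm:ℤ)) (qp:ℤ)).filter (fun j => τ (1-pm) ≤ γ j ∧ γ j < 0)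
      ⊆ Finset.Ioc (-(qm:ℤ)) 0 := by
    intro j hj
    obtain ⟨hjmem, _, hjneg⟩ := Finset.mem_filter.1 hj
    rw [Finset.mem_Ioc] at hjmem ⊢
    refine ⟨hjmem.1, ?_⟩
    by_contra hc
    exact absurd (hγpos j (Finset.mem_Ioc.2 hjmem) (by omega)) (not_lt.2 hjneg.le)
  have h2 := Finset.card_le_card hsubQ
  rw [Int.card_Ioc] at h2
  have h2' : nNeg qm qp γ (τ (1-(pm:ℤ))) ≤ ((0:ℤ) - -(qm:ℤ)).toNat := h2
  omega
end counting

section counting2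
variable {pm pp qm qp : ℕ} {τ γ : ℤ → ℝ}

lemma ppBound
    (hτneg : ∀ k ∈ Finset.Ioc (-(pm : ℤ)) (pp : ℤ), k ≤ 0 → τ k < 0)
    {x : ℝ} : nPos pm pp τ x ≤ pp := by
  have hsub : (Finset.Ioc (-(pm:ℤ)) (pp:ℤ)).filter (fun k => 0 < τ k ∧ τ k ≤ x)
      ⊆ Finset.Ioc 0 (pp:ℤ) := by
    intro k hk
    obtain ⟨hkmem, hkpos, _⟩ := Finset.mem_filter.1 hk
    rw [Finset.mem_Ioc] at hkmem ⊢
    refine ⟨?_, hkmem.2⟩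
    by_contra hc
    exact absurd (hτneg k (Finset.mem_Ioc.2 hkmem) (by omega)) (not_lt.2 hkpos.le)
  have := Finset.card_le_card hsub
  rw [Int.card_Ioc] at this
  have h2 : nPos pm pp τ x ≤ ((pp:ℤ) - 0).toNat := this
  omega

lemma qpBound (hpp : 2 ≤ pp)
    (hτneg : ∀ k ∈ Finset.Ioc (-(pm : ℤ)) (pp : ℤ), k ≤ 0 → τ k < 0)
    (hγmono : ∀ j k : ℤ, j ∈ Finset.Ioc (-(qm : ℤ)) (qp : ℤ) →
      k ∈ Finset.Ioc (-(qm : ℤ)) (qp : ℤ) → j ≤ k → γ j ≤ γ k)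
    (hγpos : ∀ j ∈ Finset.Ioc (-(qm : ℤ)) (qp : ℤ), 1 ≤ j → 0 < γ j)
    (hC1a : ∀ x : ℝ, τ 2 ≤ x → nPos qm qp γ x + 2 ≤ nPos pm pp τ x) :
    qp + 2 ≤ pp := by
  rcases Nat.eq_zero_or_pos qp with h | h
  · omega
  set x : ℝ := max (τ 2) (γ qp) with hxdef
  have hqpmem : (qp:ℤ) ∈ Finset.Ioc (-(qm:ℤ)) (qp:ℤ) := Finset.mem_Ioc.2 ⟨by omega, le_refl _⟩
  have hsub : Finset.Ioc (0:ℤ) (qp:ℤ) ⊆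
      (Finset.Ioc (-(qm:ℤ)) (qp:ℤ)).filter (fun j => 0 < γ j ∧ γ j ≤ x) := by
    intro j hj
    rw [Finset.mem_Ioc] at hj
    have hjmem : j ∈ Finset.Ioc (-(qm:ℤ)) (qp:ℤ) := Finset.mem_Ioc.2 ⟨by omega, hj.2⟩
    refine Finset.mem_filter.2 ⟨hjmem, hγpos j hjmem hj.1, ?_⟩
    exact le_trans (hγmono j _ hjmem hqpmem hj.2) (le_max_right _ _)
  have hcard : qp ≤ nPos qm qp γ x := by
    have := Finset.card_le_card hsub
    rwa [Int.card_Ioc, show ((qp:ℤ) - 0) = qp by ring, Int.toNat_natCast] at this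
  have := hC1a x (le_max_left _ _)
  have := ppBound (τ := τ) (pm := pm) hτneg (x := x)
  omega

lemma posPair (hpp : 2 ≤ pp)
    (hτmono : ∀ j k : ℤ, j ∈ Finset.Ioc (-(pm : ℤ)) (pp : ℤ) →
      k ∈ Finset.Ioc (-(pm : ℤ)) (pp : ℤ) → j ≤ k → τ j ≤ τ k)
    (hτneg : ∀ k ∈ Finset.Ioc (-(pm : ℤ)) (pp : ℤ), k ≤ 0 → τ k < 0)
    (hγmono : ∀ j k : ℤ, j ∈ Finset.Ioc (-(qm : ℤ)) (qp : ℤ) →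
      k ∈ Finset.Ioc (-(qm : ℤ)) (qp : ℤ) → j ≤ k → γ j ≤ γ k)
    (hγpos : ∀ j ∈ Finset.Ioc (-(qm : ℤ)) (qp : ℤ), 1 ≤ j → 0 < γ j)
    (hC1a : ∀ x : ℝ, τ 2 ≤ x → nPos qm qp γ x + 2 ≤ nPos pm pp τ x)
    (hC1b : ∀ x : ℝ, 0 < x → x ≤ τ 2 → nPos qm qp γ x = 0)
    {j : ℤ} (hj0 : 0 < j) (hjqp : j ≤ (qp:ℤ)) : τ (j+2) ≤ γ j := by
  have hjmem : j ∈ Finset.Ioc (-(qm:ℤ)) (qp:ℤ) := Finset.mem_Ioc.2 ⟨by omega, hjqp⟩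
  have hγj : 0 < γ j := hγpos j hjmem hj0
  have hjfil : j ∈ (Finset.Ioc (-(qm:ℤ)) (qp:ℤ)).filter (fun i => 0 < γ i ∧ γ i ≤ γ j) :=
    Finset.mem_filter.2 ⟨hjmem, hγj, le_refl _⟩
  have hx2 : τ 2 ≤ γ j := by
    by_contra hc
    have h0 := hC1b (γ j) hγj (le_of_not_ge hc)
    have : 0 < nPos qm qp γ (γ j) := Finset.card_pos.2 ⟨j, hjfil⟩
    omega
  have hsub : Finset.Ioc (0:ℤ) j ⊆
      (Finset.Ioc (-(qm:ℤ)) (qp:ℤ)).filter (fun i => 0 < γ i ∧ γ i ≤ γ j) := by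
    intro i hi
    rw [Finset.mem_Ioc] at hi
    have himem : i ∈ Finset.Ioc (-(qm:ℤ)) (qp:ℤ) := Finset.mem_Ioc.2 ⟨by omega, by omega⟩
    exact Finset.mem_filter.2 ⟨himem, hγpos i himem hi.1, hγmono i j himem hjmem hi.2⟩
  have hcardQ : (j - 0).toNat ≤ nPos qm qp γ (γ j) := by
    have := Finset.card_le_card hsub
    rwa [Int.card_Ioc] at this
  have hP := hC1a (γ j) hx2
  -- exists k in filterP with j+2 ≤ k
  by_cases hex : ∃ k ∈ (Finset.Ioc (-(pm:ℤ)) (pp:ℤ)).filter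
      (fun k => 0 < τ k ∧ τ k ≤ γ j), j + 2 ≤ k
  · obtain ⟨k, hk, hjk⟩ := hex
    obtain ⟨hkmem, hkpos, hkle⟩ := Finset.mem_filter.1 hk
    have hj2mem : j + 2 ∈ Finset.Ioc (-(pm:ℤ)) (pp:ℤ) := by
      rw [Finset.mem_Ioc] at hkmem ⊢
      exact ⟨by omega, by omega⟩
    exact le_trans (hτmono (j+2) k hj2mem hkmem hjk) hkle
  · push_neg at hex
    exfalso
    have hsubP : (Finset.Ioc (-(pm:ℤ)) (pp:ℤ)).filter (fun k => 0 < τ k ∧ τ k ≤ γ j)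
        ⊆ Finset.Ioc (0:ℤ) (j+1) := by
      intro k hk
      obtain ⟨hkmem, hkpos, _⟩ := Finset.mem_filter.1 hk
      rw [Finset.mem_Ioc]
      have hk2 : k < j + 2 := hex k hk
      refine ⟨?_, by omega⟩
      by_contra hc
      exact absurd (hτneg k hkmem (by omega)) (not_lt.2 hkpos.le)
    have := Finset.card_le_card hsubP
    rw [Int.card_Ioc] at this
    have h2 : nPos pm pp τ (γ j) ≤ (j + 1 - 0).toNat := this
    omega
end counting2

lemma sumIocSplit {f : ℤ → ℝ} {a b c : ℤ} (hab : a ≤ b) (hbc : b ≤ c) :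
    ∑ i ∈ Finset.Ioc a c, f i = ∑ i ∈ Finset.Ioc a b, f i + ∑ i ∈ Finset.Ioc b c, f i := by
  rw [← Finset.Ioc_union_Ioc_eq_Ioc hab hbc, Finset.sum_union]
  exact Finset.disjoint_left.2 fun x hx h'x =>
    absurd ((Finset.mem_Ioc.1 h'x).1) (not_lt.2 (Finset.mem_Ioc.1 hx).2)

end auxlemmas

theorem stmt5 (r pm pp qm qp : ℕ) (hr : 2 ≤ r) (hpp : 2 ≤ pp) (τ γ : ℤ → ℝ)
    (hτmono : ∀ j k : ℤ, j ∈ Finset.Ioc (-(pm : ℤ)) (pp : ℤ) →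
      k ∈ Finset.Ioc (-(pm : ℤ)) (pp : ℤ) → j ≤ k → τ j ≤ τ k)
    (hτneg : ∀ k ∈ Finset.Ioc (-(pm : ℤ)) (pp : ℤ), k ≤ 0 → τ k < 0)
    (hτpos : ∀ k ∈ Finset.Ioc (-(pm : ℤ)) (pp : ℤ), 1 ≤ k → 0 < τ k)
    (hγmono : ∀ j k : ℤ, j ∈ Finset.Ioc (-(qm : ℤ)) (qp : ℤ) →
      k ∈ Finset.Ioc (-(qm : ℤ)) (qp : ℤ) → j ≤ k → γ j ≤ γ k)
    (hγneg : ∀ j ∈ Finset.Ioc (-(qm : ℤ)) (qp : ℤ), j ≤ 0 → γ j < 0)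
    (hγpos : ∀ j ∈ Finset.Ioc (-(qm : ℤ)) (qp : ℤ), 1 ≤ j → 0 < γ j)
    (hC1a : ∀ x : ℝ, τ 2 ≤ x → nPos qm qp γ x + 2 ≤ nPos pm pp τ x)
    (hC1b : ∀ x : ℝ, 0 < x → x ≤ τ 2 → nPos qm qp γ x = 0)
    (hC2 : ∀ x : ℝ, x < 0 → nNeg pm pp τ x ≤ nNeg qm qp γ x)
    (τv θ : ℝ) (hτv : 0 < τv) (hθ0 : 0 < θ) (hθ1 : θ < Real.pi / r)
    (heq : angleSum pm pp qm qp τ γ ((τv : ℂ) * Complex.exp ((θ : ℂ) * Complex.I)) - r * θ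
      = ((pp : ℝ) - (qp : ℝ) - 1) * Real.pi) :
    τv < τ 2 := by
  by_contra hcon
  push_neg at hcon
  have hpi := Real.pi_pos
  have hr2 : (2:ℝ) ≤ (r:ℝ) := by exact_mod_cast hr
  have hθπ2 : θ < Real.pi / 2 := by
    apply lt_of_lt_of_le hθ1
    apply div_le_div_of_nonneg_left hpi.le (by norm_num)
    exact hr2
  set T : ℂ := (τv : ℂ) * Complex.exp ((θ : ℂ) * Complex.I) with hT
  have hsin : 0 < Real.sin θ := Real.sin_pos_of_pos_of_lt_pi hθ0 (by linarith)
  have hTim : 0 < T.im := by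
    have : T.im = τv * Real.sin θ := by
      simp [hT, Complex.mul_im, Complex.exp_ofReal_mul_I_re, Complex.exp_ofReal_mul_I_im]
    rw [this]; positivity
  have hsubim : ∀ a : ℝ, 0 < (T - (a:ℂ)).im := by
    intro a; simpa using hTim
  -- membership basics
  have h2mem : (2:ℤ) ∈ Finset.Ioc (-(pm:ℤ)) (pp:ℤ) := Finset.mem_Ioc.2 ⟨by omega, by omega⟩
  have h1mem : (1:ℤ) ∈ Finset.Ioc (-(pm:ℤ)) (pp:ℤ) := Finset.mem_Ioc.2 ⟨by omega, by omega⟩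
  have hτ2pos : 0 < τ 2 := hτpos 2 h2mem (by omega)
  have hτ1pos : 0 < τ 1 := hτpos 1 h1mem (by omega)
  have hτ12 : τ 1 ≤ τ 2 := hτmono 1 2 h1mem h2mem (by omega)
  -- the two key angles
  have hhalf1 : (T - ((τ 1 : ℝ):ℂ)).arg ≤ (Real.pi + θ)/2 :=
    halfAngle hτv hθ0 hθπ2 hτ1pos (by linarith)
  have hhalf2 : (T - ((τ 2 : ℝ):ℂ)).arg ≤ (Real.pi + θ)/2 :=
    halfAngle hτv hθ0 hθπ2 hτ2pos (by linarith)
  -- counting consequences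
  have hqp2pp : qp + 2 ≤ pp := qpBound hpp hτneg hγmono hγpos hC1a
  have hpmqm : pm ≤ qm := pmLEqm hτmono hτneg hγpos hC2
  set f : ℤ → ℝ := fun k => (T - ((τ k : ℝ):ℂ)).arg with hf
  set g : ℤ → ℝ := fun j => (T - ((γ j : ℝ):ℂ)).arg with hg
  have hgnn : ∀ j : ℤ, 0 ≤ g j := fun j => (argPosLtPi (hsubim (γ j))).1.le
  have hfpi : ∀ k : ℤ, f k ≤ Real.pi := fun k => Complex.arg_le_pi _
  -- split the P-sum
  have hsplitA : ∑ k ∈ Finset.Ioc (-(pm:ℤ)) (pp:ℤ), f k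
      = (∑ k ∈ Finset.Ioc (-(pm:ℤ)) (0:ℤ), f k) + (f 1 + f 2)
        + ∑ k ∈ Finset.Ioc (2:ℤ) (pp:ℤ), f k := by
    rw [sumIocSplit (by omega : (-(pm:ℤ)) ≤ 0) (by omega : (0:ℤ) ≤ (pp:ℤ)),
      sumIocSplit (by omega : (0:ℤ) ≤ 2) (by omega : (2:ℤ) ≤ (pp:ℤ))]
    have h02 : Finset.Ioc (0:ℤ) 2 = {1, 2} := by decide
    rw [h02, Finset.sum_insert (by decide), Finset.sum_singleton]
    ring
  have hsplitB : ∑ j ∈ Finset.Ioc (-(qm:ℤ)) (qp:ℤ), g j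
      = (∑ j ∈ Finset.Ioc (-(qm:ℤ)) (0:ℤ), g j) + ∑ j ∈ Finset.Ioc (0:ℤ) (qp:ℤ), g j :=
    sumIocSplit (by omega) (by omega)
  -- negative part comparison
  have hineq1 : ∑ k ∈ Finset.Ioc (-(pm:ℤ)) (0:ℤ), f k
      ≤ ∑ j ∈ Finset.Ioc (-(qm:ℤ)) (0:ℤ), g j := by
    calc ∑ k ∈ Finset.Ioc (-(pm:ℤ)) (0:ℤ), f k
        ≤ ∑ k ∈ Finset.Ioc (-(pm:ℤ)) (0:ℤ), g k := by
          apply Finset.sum_le_sum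
          intro k hk
          rw [Finset.mem_Ioc] at hk
          exact argAnti hTim (negPair hτmono hτneg hγmono hγpos hC2 hk.1 hk.2)
      _ ≤ ∑ j ∈ Finset.Ioc (-(qm:ℤ)) (0:ℤ), g j := by
          apply Finset.sum_le_sum_of_subset_of_nonneg
          · apply Finset.Ioc_subset_Ioc_left; omega
          · intro j _ _; exact hgnn j
  -- positive tail comparison
  have hineq2 : ∑ k ∈ Finset.Ioc (2:ℤ) (pp:ℤ), f k
      ≤ (∑ j ∈ Finset.Ioc (0:ℤ) (qp:ℤ), g j) + ((pp:ℝ) - (qp:ℝ) - 2) * Real.pi := by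
    rw [sumIocSplit (by omega : (2:ℤ) ≤ (qp:ℤ)+2) (by omega : ((qp:ℤ)+2) ≤ (pp:ℤ))]
    have hmap : Finset.Ioc (2:ℤ) ((qp:ℤ)+2)
        = (Finset.Ioc (0:ℤ) (qp:ℤ)).map (addRightEmbedding 2) := by
      rw [Finset.map_add_right_Ioc]; norm_num
    have hpart1 : ∑ k ∈ Finset.Ioc (2:ℤ) ((qp:ℤ)+2), f k
        ≤ ∑ j ∈ Finset.Ioc (0:ℤ) (qp:ℤ), g j := by
      rw [hmap, Finset.sum_map]
      apply Finset.sum_le_sum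
      intro j hj
      rw [Finset.mem_Ioc] at hj
      have := posPair hpp hτmono hτneg hγmono hγpos hC1a hC1b hj.1 hj.2
      exact argAnti hTim this
    have hpart2 : ∑ k ∈ Finset.Ioc ((qp:ℤ)+2) (pp:ℤ), f k
        ≤ ((pp:ℝ) - (qp:ℝ) - 2) * Real.pi := by
      have hb := Finset.sum_le_card_nsmul (Finset.Ioc ((qp:ℤ)+2) (pp:ℤ)) f Real.pi
        (fun k _ => hfpi k)
      rw [Int.card_Ioc] at hb
      have hcast : ((((pp:ℤ) - ((qp:ℤ)+2)).toNat : ℕ) : ℝ) = (pp:ℝ) - (qp:ℝ) - 2 := by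
        rw [show ((pp:ℤ) - ((qp:ℤ)+2)).toNat = pp - (qp+2) by omega, Nat.cast_sub hqp2pp]
        push_cast; ring
      calc ∑ k ∈ Finset.Ioc ((qp:ℤ)+2) (pp:ℤ), f k
          ≤ (((pp:ℤ) - ((qp:ℤ)+2)).toNat) • Real.pi := hb
        _ = ((pp:ℝ) - (qp:ℝ) - 2) * Real.pi := by rw [nsmul_eq_mul, hcast]
    linarith
  -- final contradiction
  unfold angleSum at heq
  have hA : (∑ k ∈ Finset.Ioc (-(pm:ℤ)) (pp:ℤ), f k)
      - (∑ j ∈ Finset.Ioc (-(qm:ℤ)) (qp:ℤ), g j) - r * θ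
      = ((pp : ℝ) - (qp : ℝ) - 1) * Real.pi := heq
  rw [hsplitA, hsplitB] at hA
  have hf1 : f 1 ≤ (Real.pi + θ)/2 := hhalf1
  have hf2 : f 2 ≤ (Real.pi + θ)/2 := hhalf2
  nlinarith [hineq1, hineq2, hf1, hf2, hθ0, hr2, mul_le_mul_of_nonneg_right hr2 hθ0.le]
end
end

section
/- Assume (C1) n_+^P(x)-n_+^Q(x) ≥ 2 for all x ≥ τ_2 and n_+^Q(x)=0 for all x ∈ (0,τ_2] (in particular p_+ ≥ 2), (C2) n_-^Q(x)-n_-^P(x) ≥ 0 for all x<0, and (C3) Im R(t) > 0 on the sector {t : 0<|t|<τ_2, 0<Arg t<π/r}. Then for each θ ∈ (0,π/r) there exists a unique τ > 0 such that t = τe^{iθ} satisfies Σ_{-p_-<k≤p_+} θ_k(t) - Σ_{-q_-<j≤q_+} η_j(t) - rθ = (p_+-q_+-1)π. -/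
open Complex Real Filter Finset


noncomputable section

lemma argIm (z : ℂ) (hz : 0 < z.im) :
    z.arg = π / 2 - Real.arctan (z.re / z.im) := by
  have hz0 : z ≠ 0 := by intro h; rw [h] at hz; simp at hz
  have h1 : z.arg ∈ Set.Icc 0 π :=
    ⟨Complex.arg_nonneg_iff.2 hz.le, Complex.arg_le_pi z⟩
  have h2 : π / 2 - Real.arctan (z.re / z.im) ∈ Set.Icc 0 π := by
    constructor
    · nlinarith [Real.arctan_lt_pi_div_two (z.re / z.im)]
    · nlinarith [Real.neg_pi_div_two_lt_arctan (z.re / z.im), Real.pi_pos]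
  refine Real.injOn_cos h1 h2 ?_
  rw [Complex.cos_arg hz0, Real.cos_pi_div_two_sub, Real.sin_arctan]
  have habs : ‖z‖ = Real.sqrt (z.re ^ 2 + z.im ^ 2) := by
    rw [Complex.norm_def, Complex.normSq_apply]; ring_nf
  have hsq : Real.sqrt (1 + (z.re / z.im) ^ 2)
      = Real.sqrt (z.re ^ 2 + z.im ^ 2) / z.im := by
    rw [eq_div_iff hz.ne', ← Real.sqrt_sq hz.le, ← Real.sqrt_mul (by positivity)]
    congr 1
    field_simp
    linear_combination (-(Real.sqrt (z.im ^ 2)) ^ 2 - z.re ^ 2) * (Real.sq_sqrt (sq_nonneg z.im))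
  rw [habs, hsq]
  have h3 : Real.sqrt (z.re ^ 2 + z.im ^ 2) ≠ 0 := by
    refine (Real.sqrt_pos.2 ?_).ne'
    nlinarith
  field_simp

lemma argAnti_s6 {z w : ℂ} (hz : 0 < z.im) (him : z.im = w.im) (hre : z.re ≤ w.re) :
    w.arg ≤ z.arg := by
  rw [argIm z hz, argIm w (him ▸ hz), ← him]
  have h1 : z.re / z.im ≤ w.re / z.im := div_le_div_of_nonneg_right hre hz.le
  have := Real.arctan_strictMono.monotone h1
  linarith

lemma argPos {z : ℂ} (hz : 0 < z.im) : 0 < z.arg := by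
  rw [argIm z hz]
  nlinarith [Real.arctan_lt_pi_div_two (z.re / z.im)]

lemma ray_re (v θ a : ℝ) :
    ((v : ℂ) * Complex.exp ((θ : ℂ) * Complex.I) - (a : ℂ)).re = v * Real.cos θ - a := by
  simp [Complex.exp_mul_I, Complex.cos_ofReal_re]

lemma ray_im (v θ a : ℝ) :
    ((v : ℂ) * Complex.exp ((θ : ℂ) * Complex.I) - (a : ℂ)).im = v * Real.sin θ := by
  simp [Complex.exp_mul_I, Complex.sin_ofReal_re]

lemma halfAngleBound {v θ a : ℝ} (hθ0 : 0 < θ) (hθπ : θ < π) (ha : 0 < a) (hav : a ≤ v) :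
    ((v : ℂ) * Complex.exp ((θ : ℂ) * Complex.I) - (a : ℂ)).arg ≤ π / 2 + θ / 2 := by
  have hv : 0 < v := ha.trans_le hav
  have hs : 0 < Real.sin θ := Real.sin_pos_of_pos_of_lt_pi hθ0 hθπ
  set z : ℂ := (v : ℂ) * Complex.exp ((θ : ℂ) * Complex.I) - (v : ℂ)
  set w : ℂ := (v : ℂ) * Complex.exp ((θ : ℂ) * Complex.I) - (a : ℂ)
  have hzim : 0 < z.im := by rw [ray_im]; positivity
  have hle : w.arg ≤ z.arg := by
    refine argAnti_s6 hzim ?_ ?_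
    · rw [ray_im, ray_im]
    · rw [ray_re, ray_re]; linarith
  refine hle.trans ?_
  rw [argIm z hzim, ray_re, ray_im]
  have hs2 : 0 < Real.sin (θ / 2) := Real.sin_pos_of_pos_of_lt_pi (by linarith) (by linarith)
  have hc2 : 0 < Real.cos (θ / 2) := Real.cos_pos_of_mem_Ioo ⟨by linarith [Real.pi_pos], by linarith⟩
  have hratio : (v * Real.cos θ - v) / (v * Real.sin θ) = -Real.tan (θ / 2) := by
    have hsin : Real.sin θ = 2 * Real.sin (θ / 2) * Real.cos (θ / 2) := by
      rw [← Real.sin_two_mul]; ring_nf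
    have hcos : Real.cos θ = 2 * Real.cos (θ / 2) ^ 2 - 1 := by
      rw [← Real.cos_two_mul]; ring_nf
    have hpy : Real.sin (θ / 2) ^ 2 + Real.cos (θ / 2) ^ 2 = 1 := Real.sin_sq_add_cos_sq _
    rw [hsin, hcos, Real.tan_eq_sin_div_cos]
    rw [div_eq_iff (by positivity)]
    field_simp
    linear_combination 2 * hpy
  rw [hratio, Real.arctan_neg, Real.arctan_tan (by linarith [Real.pi_pos]) (by linarith)]
  linarith

lemma hasDerivAt_argRay {e : ℂ} {a v : ℝ} (him : 0 < ((v : ℂ) * e - (a : ℂ)).im) :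
    HasDerivAt (fun s : ℝ => ((s : ℂ) * e - (a : ℂ)).arg)
      (e / ((v : ℂ) * e - (a : ℂ))).im v := by
  have h1 : HasDerivAt (fun s : ℝ => (s : ℂ) * e - (a : ℂ)) e v := by
    simpa using (Complex.ofRealCLM.hasDerivAt.mul_const e).sub_const (a : ℂ)
  have h2 : HasDerivAt (fun s : ℝ => Complex.log ((s : ℂ) * e - (a : ℂ)))
      (e / ((v : ℂ) * e - (a : ℂ))) v :=
    h1.clog_real (Complex.mem_slitPlane_iff.2 (Or.inr him.ne'))
  have h3 := (Complex.imCLM.hasFDerivAt.comp_hasDerivAt v h2)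
  simpa [Function.comp_def, Complex.log_im] using h3

lemma tendsto_argRay_pos {θ a : ℝ} (hθ0 : 0 < θ) (hθπ : θ < π) (ha : 0 < a) :
    Tendsto (fun v : ℝ => ((v : ℂ) * Complex.exp ((θ : ℂ) * Complex.I) - (a : ℂ)).arg)
      (nhdsWithin 0 (Set.Ioi 0)) (nhds π) := by
  have hs : 0 < Real.sin θ := Real.sin_pos_of_pos_of_lt_pi hθ0 hθπ
  have key : Tendsto (fun v : ℝ => (v * Real.cos θ - a) / (v * Real.sin θ))
      (nhdsWithin 0 (Set.Ioi 0)) atBot := by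
    have h1 : Tendsto (fun v : ℝ => (v * Real.cos θ - a) / Real.sin θ)
        (nhdsWithin 0 (Set.Ioi 0)) (nhds (-a / Real.sin θ)) := by
      apply Tendsto.mono_left _ nhdsWithin_le_nhds
      have : ContinuousAt (fun v : ℝ => (v * Real.cos θ - a) / Real.sin θ) 0 := by fun_prop
      simpa using this.tendsto
    have h2 : Tendsto (fun v : ℝ => v⁻¹) (nhdsWithin (0:ℝ) (Set.Ioi 0)) atTop :=
      tendsto_inv_nhdsGT_zero
    have h3 := Tendsto.neg_mul_atTop (C := -a / Real.sin θ) (div_neg_of_neg_of_pos (neg_neg_iff_pos.2 ha) hs) h1 h2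
    refine h3.congr' ?_
    filter_upwards [self_mem_nhdsWithin] with v hv
    rw [Set.mem_Ioi] at hv
    rw [div_eq_mul_inv, div_eq_mul_inv, mul_assoc, ← mul_inv, mul_comm (Real.sin θ) v]
  have harct : Tendsto (fun v : ℝ => Real.arctan ((v * Real.cos θ - a) / (v * Real.sin θ)))
      (nhdsWithin 0 (Set.Ioi 0)) (nhds (-(π/2))) :=
    (Real.tendsto_arctan_atBot.mono_right nhdsWithin_le_nhds).comp key
  have final : Tendsto (fun v : ℝ => π/2 - Real.arctan ((v * Real.cos θ - a) / (v * Real.sin θ)))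
      (nhdsWithin 0 (Set.Ioi 0)) (nhds π) := by
    have := (tendsto_const_nhds (x := π/2) (f := nhdsWithin (0:ℝ) (Set.Ioi 0))).sub harct
    simpa using this.congr (fun v => rfl)
  refine final.congr' ?_
  filter_upwards [self_mem_nhdsWithin] with v hv
  rw [Set.mem_Ioi] at hv
  rw [argIm _ (by rw [ray_im]; positivity), ray_re, ray_im]

lemma tendsto_argRay_neg {θ a : ℝ} (hθ0 : 0 < θ) (hθπ : θ < π) (ha : a < 0) :
    Tendsto (fun v : ℝ => ((v : ℂ) * Complex.exp ((θ : ℂ) * Complex.I) - (a : ℂ)).arg)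
      (nhdsWithin 0 (Set.Ioi 0)) (nhds 0) := by
  have hs : 0 < Real.sin θ := Real.sin_pos_of_pos_of_lt_pi hθ0 hθπ
  have key : Tendsto (fun v : ℝ => (v * Real.cos θ - a) / (v * Real.sin θ))
      (nhdsWithin 0 (Set.Ioi 0)) atTop := by
    have h1 : Tendsto (fun v : ℝ => (v * Real.cos θ - a) / Real.sin θ)
        (nhdsWithin 0 (Set.Ioi 0)) (nhds (-a / Real.sin θ)) := by
      apply Tendsto.mono_left _ nhdsWithin_le_nhds
      have : ContinuousAt (fun v : ℝ => (v * Real.cos θ - a) / Real.sin θ) 0 := by fun_prop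
      simpa using this.tendsto
    have h2 : Tendsto (fun v : ℝ => v⁻¹) (nhdsWithin (0:ℝ) (Set.Ioi 0)) atTop :=
      tendsto_inv_nhdsGT_zero
    have h3 := Tendsto.pos_mul_atTop (C := -a / Real.sin θ) (div_pos (neg_pos.2 ha) hs) h1 h2
    refine h3.congr' ?_
    filter_upwards [self_mem_nhdsWithin] with v hv
    rw [Set.mem_Ioi] at hv
    rw [div_eq_mul_inv, div_eq_mul_inv, mul_assoc, ← mul_inv, mul_comm (Real.sin θ) v]
  have harct : Tendsto (fun v : ℝ => Real.arctan ((v * Real.cos θ - a) / (v * Real.sin θ)))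
      (nhdsWithin 0 (Set.Ioi 0)) (nhds (π/2)) :=
    (Real.tendsto_arctan_atTop.mono_right nhdsWithin_le_nhds).comp key
  have final : Tendsto (fun v : ℝ => π/2 - Real.arctan ((v * Real.cos θ - a) / (v * Real.sin θ)))
      (nhdsWithin 0 (Set.Ioi 0)) (nhds 0) := by
    have := (tendsto_const_nhds (x := π/2) (f := nhdsWithin (0:ℝ) (Set.Ioi 0))).sub harct
    simpa using this
  refine final.congr' ?_
  filter_upwards [self_mem_nhdsWithin] with v hv
  rw [Set.mem_Ioi] at hv
  rw [argIm _ (by rw [ray_im]; positivity), ray_re, ray_im]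

lemma cval_prod (pm pp : ℕ) (τ : ℤ → ℝ) (z : ℂ) :
    cval (prodPoly pm pp τ) z
      = ∏ k ∈ Finset.Ioc (-(pm : ℤ)) (pp : ℤ), (z - (τ k : ℂ)) := by
  unfold cval prodPoly
  rw [map_prod]
  simp

lemma cval_derivative_prod (pm pp : ℕ) (τ : ℤ → ℝ) (z : ℂ) :
    cval (Polynomial.derivative (prodPoly pm pp τ)) z
      = ∑ k ∈ Finset.Ioc (-(pm : ℤ)) (pp : ℤ),
          ∏ l ∈ (Finset.Ioc (-(pm : ℤ)) (pp : ℤ)).erase k, (z - (τ l : ℂ)) := by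
  unfold cval prodPoly
  have key : Polynomial.derivative (∏ k ∈ Finset.Ioc (-(pm : ℤ)) (pp : ℤ),
        (Polynomial.X - Polynomial.C (τ k)))
      = ∑ k ∈ Finset.Ioc (-(pm : ℤ)) (pp : ℤ),
          (∏ l ∈ (Finset.Ioc (-(pm : ℤ)) (pp : ℤ)).erase k, (Polynomial.X - Polynomial.C (τ l)))
            * Polynomial.derivative (Polynomial.X - Polynomial.C (τ k)) :=
    Polynomial.derivative_prod
  rw [key, map_sum]
  refine Finset.sum_congr rfl fun k hk => ?_
  rw [map_mul, map_prod]
  simp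

lemma ratio_sum (pm pp : ℕ) (τ : ℤ → ℝ) (z : ℂ)
    (hz : ∀ k ∈ Finset.Ioc (-(pm : ℤ)) (pp : ℤ), z - (τ k : ℂ) ≠ 0) :
    z * cval (Polynomial.derivative (prodPoly pm pp τ)) z / cval (prodPoly pm pp τ) z
      = ∑ k ∈ Finset.Ioc (-(pm : ℤ)) (pp : ℤ), z / (z - (τ k : ℂ)) := by
  rw [cval_prod, cval_derivative_prod, Finset.mul_sum, Finset.sum_div]
  refine Finset.sum_congr rfl fun k hk => ?_
  rw [← Finset.mul_prod_erase _ _ hk]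
  rw [div_eq_div_iff]
  · ring
  · exact mul_ne_zero (hz k hk) (Finset.prod_ne_zero_iff.2 fun l hl =>
      hz l (Finset.mem_of_mem_erase hl))
  · exact hz k hk

lemma Rfun_eq (r pm pp qm qp : ℕ) (τ γ : ℤ → ℝ) (z : ℂ) (hz : 0 < z.im) :
    Rfun r pm pp qm qp τ γ z
      = (r : ℂ) - (∑ k ∈ Finset.Ioc (-(pm : ℤ)) (pp : ℤ), z / (z - (τ k : ℂ)))
          + ∑ j ∈ Finset.Ioc (-(qm : ℤ)) (qp : ℤ), z / (z - (γ j : ℂ)) := by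
  have hne : ∀ (a : ℝ), z - (a : ℂ) ≠ 0 := fun a h => by
    have : (z - (a : ℂ)).im = 0 := by rw [h]; simp
    simp [Complex.sub_im] at this
    exact absurd this hz.ne'
  unfold Rfun
  rw [ratio_sum pm pp τ z (fun k _ => hne (τ k)), ratio_sum qm qp γ z (fun j _ => hne (γ j))]

lemma pairPos (pm pp qm qp : ℕ) (hpp : 2 ≤ pp) (τ γ : ℤ → ℝ)
    (hτmono : ∀ j k : ℤ, j ∈ Finset.Ioc (-(pm : ℤ)) (pp : ℤ) →
      k ∈ Finset.Ioc (-(pm : ℤ)) (pp : ℤ) → j ≤ k → τ j ≤ τ k)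
    (hτneg : ∀ k ∈ Finset.Ioc (-(pm : ℤ)) (pp : ℤ), k ≤ 0 → τ k < 0)
    (hγmono : ∀ j k : ℤ, j ∈ Finset.Ioc (-(qm : ℤ)) (qp : ℤ) →
      k ∈ Finset.Ioc (-(qm : ℤ)) (qp : ℤ) → j ≤ k → γ j ≤ γ k)
    (hγpos : ∀ j ∈ Finset.Ioc (-(qm : ℤ)) (qp : ℤ), 1 ≤ j → 0 < γ j)
    (hC1a : ∀ x : ℝ, τ 2 ≤ x → nPos qm qp γ x + 2 ≤ nPos pm pp τ x)
    (hC1b : ∀ x : ℝ, 0 < x → x ≤ τ 2 → nPos qm qp γ x = 0)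
    (j : ℤ) (hj1 : 1 ≤ j) (hjqp : j ≤ (qp : ℤ)) :
    j + 2 ≤ (pp : ℤ) ∧ τ (j + 2) ≤ γ j := by
  have hjKQ : j ∈ Finset.Ioc (-(qm : ℤ)) (qp : ℤ) := by
    simp only [Finset.mem_Ioc]; omega
  have hγj : 0 < γ j := hγpos j hjKQ hj1
  have hTγ : τ 2 ≤ γ j := by
    by_contra h
    push_neg at h
    have h0 := hC1b (γ j) hγj h.le
    unfold nPos at h0
    rw [Finset.card_eq_zero] at h0
    have : j ∈ (Finset.Ioc (-(qm : ℤ)) (qp : ℤ)).filter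
        fun i => 0 < γ i ∧ γ i ≤ γ j := by
      rw [Finset.mem_filter]; exact ⟨hjKQ, hγj, le_refl _⟩
    rw [h0] at this
    exact absurd this (Finset.notMem_empty j)
  have hcount := hC1a (γ j) hTγ
  have hsub : Finset.Ioc (0 : ℤ) j ⊆ (Finset.Ioc (-(qm : ℤ)) (qp : ℤ)).filter
      fun i => 0 < γ i ∧ γ i ≤ γ j := by
    intro i hi
    rw [Finset.mem_Ioc] at hi
    have hiKQ : i ∈ Finset.Ioc (-(qm : ℤ)) (qp : ℤ) := by
      simp only [Finset.mem_Ioc]; omega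
    rw [Finset.mem_filter]
    exact ⟨hiKQ, hγpos i hiKQ (by omega), hγmono i j hiKQ hjKQ hi.2⟩
  have h1 : j.toNat ≤ nPos qm qp γ (γ j) := by
    have := Finset.card_le_card hsub
    rwa [Int.card_Ioc, show j - 0 = j by ring] at this
  have h2 : j.toNat + 2 ≤ nPos pm pp τ (γ j) := by omega
  have hSsub : (Finset.Ioc (-(pm : ℤ)) (pp : ℤ)).filter
      (fun k => 0 < τ k ∧ τ k ≤ γ j) ⊆ Finset.Ioc (0 : ℤ) (pp : ℤ) := by
    intro k hk
    rw [Finset.mem_filter, Finset.mem_Ioc] at hk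
    rw [Finset.mem_Ioc]
    refine ⟨?_, hk.1.2⟩
    by_contra hk0
    push_neg at hk0
    exact absurd hk.2.1 (not_lt.2 (hτneg k (by simp only [Finset.mem_Ioc]; omega)
      (by omega)).le)
  obtain ⟨k, hkS, hkj⟩ : ∃ k ∈ (Finset.Ioc (-(pm : ℤ)) (pp : ℤ)).filter
      (fun k => 0 < τ k ∧ τ k ≤ γ j), j + 2 ≤ k := by
    by_contra h
    push_neg at h
    have hsub2 : (Finset.Ioc (-(pm : ℤ)) (pp : ℤ)).filter
        (fun k => 0 < τ k ∧ τ k ≤ γ j) ⊆ Finset.Ioc (0 : ℤ) (j + 1) := by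
      intro k hk
      have hk2 := hSsub hk
      rw [Finset.mem_Ioc] at hk2 ⊢
      exact ⟨hk2.1, by have := h k hk; omega⟩
    have := Finset.card_le_card hsub2
    rw [Int.card_Ioc] at this
    unfold nPos at h2
    omega
  rw [Finset.mem_filter, Finset.mem_Ioc] at hkS
  refine ⟨by omega, ?_⟩
  calc τ (j + 2) ≤ τ k := hτmono (j + 2) k (by simp only [Finset.mem_Ioc]; omega)
        (by simp only [Finset.mem_Ioc]; omega) hkj
  _ ≤ γ j := hkS.2.2

lemma pairNeg (pm pp qm qp : ℕ) (τ γ : ℤ → ℝ)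
    (hτmono : ∀ j k : ℤ, j ∈ Finset.Ioc (-(pm : ℤ)) (pp : ℤ) →
      k ∈ Finset.Ioc (-(pm : ℤ)) (pp : ℤ) → j ≤ k → τ j ≤ τ k)
    (hτneg : ∀ k ∈ Finset.Ioc (-(pm : ℤ)) (pp : ℤ), k ≤ 0 → τ k < 0)
    (hγmono : ∀ j k : ℤ, j ∈ Finset.Ioc (-(qm : ℤ)) (qp : ℤ) →
      k ∈ Finset.Ioc (-(qm : ℤ)) (qp : ℤ) → j ≤ k → γ j ≤ γ k)
    (hγpos : ∀ j ∈ Finset.Ioc (-(qm : ℤ)) (qp : ℤ), 1 ≤ j → 0 < γ j)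
    (hC2 : ∀ x : ℝ, x < 0 → nNeg pm pp τ x ≤ nNeg qm qp γ x)
    (i : ℤ) (hi1 : -(pm : ℤ) < i) (hi0 : i ≤ 0) :
    -(qm : ℤ) < i ∧ τ i ≤ γ i := by
  have hiKP : i ∈ Finset.Ioc (-(pm : ℤ)) (pp : ℤ) := by
    simp only [Finset.mem_Ioc]; omega
  have hτi : τ i < 0 := hτneg i hiKP hi0
  have hcount := hC2 (τ i) hτi
  have hsub : Finset.Ioc (i - 1) (0 : ℤ) ⊆ (Finset.Ioc (-(pm : ℤ)) (pp : ℤ)).filter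
      fun k => τ i ≤ τ k ∧ τ k < 0 := by
    intro k hk
    rw [Finset.mem_Ioc] at hk
    have hkKP : k ∈ Finset.Ioc (-(pm : ℤ)) (pp : ℤ) := by
      simp only [Finset.mem_Ioc]; omega
    rw [Finset.mem_filter]
    exact ⟨hkKP, hτmono i k hiKP hkKP (by omega), hτneg k hkKP hk.2⟩
  have h1 : (1 - i).toNat ≤ nNeg pm pp τ (τ i) := by
    have := Finset.card_le_card hsub
    rwa [Int.card_Ioc, show (0 : ℤ) - (i - 1) = 1 - i by ring] at this
  have h2 : (1 - i).toNat ≤ nNeg qm qp γ (τ i) := le_trans h1 hcount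
  have hSsub : (Finset.Ioc (-(qm : ℤ)) (qp : ℤ)).filter
      (fun k => τ i ≤ γ k ∧ γ k < 0) ⊆ Finset.Ioc (-(qm : ℤ)) (0 : ℤ) := by
    intro k hk
    rw [Finset.mem_filter, Finset.mem_Ioc] at hk
    rw [Finset.mem_Ioc]
    refine ⟨hk.1.1, ?_⟩
    by_contra hk0
    push_neg at hk0
    exact absurd hk.2.2 (not_lt.2 (hγpos k (by simp only [Finset.mem_Ioc]; omega)
      (by omega)).le)
  obtain ⟨k, hkS, hki⟩ : ∃ k ∈ (Finset.Ioc (-(qm : ℤ)) (qp : ℤ)).filter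
      (fun k => τ i ≤ γ k ∧ γ k < 0), k ≤ i := by
    by_contra h
    push_neg at h
    have hsub2 : (Finset.Ioc (-(qm : ℤ)) (qp : ℤ)).filter
        (fun k => τ i ≤ γ k ∧ γ k < 0) ⊆ Finset.Ioc i (0 : ℤ) := by
      intro k hk
      have hk2 := hSsub hk
      rw [Finset.mem_Ioc] at hk2 ⊢
      exact ⟨h k hk, hk2.2⟩
    have := Finset.card_le_card hsub2
    rw [Int.card_Ioc] at this
    unfold nNeg at h2
    omega
  rw [Finset.mem_filter, Finset.mem_Ioc] at hkS
  have hqmi : -(qm : ℤ) < i := by omega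
  refine ⟨hqmi, ?_⟩
  calc τ i ≤ γ k := hkS.2.1
  _ ≤ γ i := hγmono k i (by simp only [Finset.mem_Ioc]; omega)
      (by simp only [Finset.mem_Ioc]; omega) hki

lemma sum_Ioc_split {f : ℤ → ℝ} {a b c : ℤ} (hab : a ≤ b) (hbc : b ≤ c) :
    ∑ k ∈ Finset.Ioc a c, f k
      = (∑ k ∈ Finset.Ioc a b, f k) + ∑ k ∈ Finset.Ioc b c, f k := by
  rw [← Finset.Ioc_union_Ioc_eq_Ioc hab hbc, Finset.sum_union]
  rw [Finset.disjoint_left]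
  intro x hx hx'
  rw [Finset.mem_Ioc] at hx hx'
  omega

lemma tailBound (r pm pp qm qp : ℕ) (hr : 2 ≤ r) (hpp : 2 ≤ pp) (τ γ : ℤ → ℝ)
    (hτmono : ∀ j k : ℤ, j ∈ Finset.Ioc (-(pm : ℤ)) (pp : ℤ) →
      k ∈ Finset.Ioc (-(pm : ℤ)) (pp : ℤ) → j ≤ k → τ j ≤ τ k)
    (hτneg : ∀ k ∈ Finset.Ioc (-(pm : ℤ)) (pp : ℤ), k ≤ 0 → τ k < 0)
    (hτpos : ∀ k ∈ Finset.Ioc (-(pm : ℤ)) (pp : ℤ), 1 ≤ k → 0 < τ k)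
    (hγmono : ∀ j k : ℤ, j ∈ Finset.Ioc (-(qm : ℤ)) (qp : ℤ) →
      k ∈ Finset.Ioc (-(qm : ℤ)) (qp : ℤ) → j ≤ k → γ j ≤ γ k)
    (hγpos : ∀ j ∈ Finset.Ioc (-(qm : ℤ)) (qp : ℤ), 1 ≤ j → 0 < γ j)
    (hC1a : ∀ x : ℝ, τ 2 ≤ x → nPos qm qp γ x + 2 ≤ nPos pm pp τ x)
    (hC1b : ∀ x : ℝ, 0 < x → x ≤ τ 2 → nPos qm qp γ x = 0)
    (hC2 : ∀ x : ℝ, x < 0 → nNeg pm pp τ x ≤ nNeg qm qp γ x)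
    (θ v : ℝ) (hθ0 : 0 < θ) (hθπ : θ < π) (hTv : τ 2 ≤ v) :
    (∑ k ∈ Finset.Ioc (-(pm : ℤ)) (pp : ℤ),
        ((v : ℂ) * Complex.exp ((θ : ℂ) * Complex.I) - ((τ k : ℝ) : ℂ)).arg)
      - (∑ j ∈ Finset.Ioc (-(qm : ℤ)) (qp : ℤ),
        ((v : ℂ) * Complex.exp ((θ : ℂ) * Complex.I) - ((γ j : ℝ) : ℂ)).arg)
      - (r : ℝ) * θ < ((pp : ℝ) - (qp : ℝ) - 1) * π := by
  have h2KP : (2 : ℤ) ∈ Finset.Ioc (-(pm : ℤ)) (pp : ℤ) := by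
    simp only [Finset.mem_Ioc]; omega
  have hT : 0 < τ 2 := hτpos 2 h2KP (by norm_num)
  have hv : 0 < v := lt_of_lt_of_le hT hTv
  have hs : 0 < Real.sin θ := Real.sin_pos_of_pos_of_lt_pi hθ0 hθπ
  set e : ℂ := Complex.exp ((θ : ℂ) * Complex.I) with he
  have him : ∀ a : ℝ, 0 < ((v : ℂ) * e - (a : ℂ)).im := by
    intro a; rw [he, ray_im]; positivity
  have hargpos : ∀ a : ℝ, 0 < ((v : ℂ) * e - (a : ℂ)).arg := fun a => argPos (him a)
  have harglepi : ∀ a : ℝ, ((v : ℂ) * e - (a : ℂ)).arg ≤ π := fun a => Complex.arg_le_pi _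
  have hargmono : ∀ a b : ℝ, a ≤ b →
      ((v : ℂ) * e - (a : ℂ)).arg ≤ ((v : ℂ) * e - (b : ℂ)).arg := by
    intro a b hab
    refine argAnti_s6 (him b) ?_ ?_
    · rw [he, ray_im, ray_im]
    · rw [he, ray_re, ray_re]; linarith
  -- qp + 2 ≤ pp
  have hppqp : (qp : ℤ) + 2 ≤ (pp : ℤ) := by
    rcases Nat.eq_zero_or_pos qp with h0 | h1
    · omega
    · exact (pairPos pm pp qm qp hpp τ γ hτmono hτneg hγmono hγpos hC1a hC1b
        (qp : ℤ) (by omega) le_rfl).1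
  -- split P sum
  have hsplitP : ∑ k ∈ Finset.Ioc (-(pm : ℤ)) (pp : ℤ), ((v : ℂ) * e - ((τ k : ℝ) : ℂ)).arg
      = (∑ k ∈ Finset.Ioc (-(pm : ℤ)) (0 : ℤ), ((v : ℂ) * e - ((τ k : ℝ) : ℂ)).arg)
        + ∑ k ∈ Finset.Ioc (0 : ℤ) (pp : ℤ), ((v : ℂ) * e - ((τ k : ℝ) : ℂ)).arg :=
    sum_Ioc_split (by omega) (by omega)
  have hsplitQ : ∑ j ∈ Finset.Ioc (-(qm : ℤ)) (qp : ℤ), ((v : ℂ) * e - ((γ j : ℝ) : ℂ)).arg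
      = (∑ j ∈ Finset.Ioc (-(qm : ℤ)) (0 : ℤ), ((v : ℂ) * e - ((γ j : ℝ) : ℂ)).arg)
        + ∑ j ∈ Finset.Ioc (0 : ℤ) (qp : ℤ), ((v : ℂ) * e - ((γ j : ℝ) : ℂ)).arg :=
    sum_Ioc_split (by omega) (by omega)
  -- negative part
  have hB1 : ∑ k ∈ Finset.Ioc (-(pm : ℤ)) (0 : ℤ), ((v : ℂ) * e - ((τ k : ℝ) : ℂ)).arg
      ≤ ∑ j ∈ Finset.Ioc (-(qm : ℤ)) (0 : ℤ), ((v : ℂ) * e - ((γ j : ℝ) : ℂ)).arg := by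
    have step1 : ∑ k ∈ Finset.Ioc (-(pm : ℤ)) (0 : ℤ), ((v : ℂ) * e - ((τ k : ℝ) : ℂ)).arg
        ≤ ∑ k ∈ Finset.Ioc (-(pm : ℤ)) (0 : ℤ), ((v : ℂ) * e - ((γ k : ℝ) : ℂ)).arg := by
      refine Finset.sum_le_sum fun i hi => ?_
      rw [Finset.mem_Ioc] at hi
      exact hargmono _ _ (pairNeg pm pp qm qp τ γ hτmono hτneg hγmono hγpos hC2
        i hi.1 hi.2).2
    refine step1.trans (Finset.sum_le_sum_of_subset_of_nonneg ?_ fun j _ _ => (hargpos _).le)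
    intro i hi
    rw [Finset.mem_Ioc] at hi ⊢
    exact ⟨(pairNeg pm pp qm qp τ γ hτmono hτneg hγmono hγpos hC2 i hi.1 hi.2).1, hi.2⟩
  -- first two positive zeros
  have hsplit2 : ∑ k ∈ Finset.Ioc (0 : ℤ) (pp : ℤ), ((v : ℂ) * e - ((τ k : ℝ) : ℂ)).arg
      = (∑ k ∈ Finset.Ioc (0 : ℤ) (2 : ℤ), ((v : ℂ) * e - ((τ k : ℝ) : ℂ)).arg)
        + ∑ k ∈ Finset.Ioc (2 : ℤ) (pp : ℤ), ((v : ℂ) * e - ((τ k : ℝ) : ℂ)).arg :=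
    sum_Ioc_split (by omega) (by omega)
  have hB2a : ∑ k ∈ Finset.Ioc (0 : ℤ) (2 : ℤ), ((v : ℂ) * e - ((τ k : ℝ) : ℂ)).arg
      ≤ π + θ := by
    have h12 : Finset.Ioc (0 : ℤ) (2 : ℤ) = {1, 2} := by decide
    rw [h12, Finset.sum_insert (by decide), Finset.sum_singleton]
    have ht1 : 0 < τ 1 := hτpos 1 (by simp only [Finset.mem_Ioc]; omega) le_rfl
    have ht12 : τ 1 ≤ τ 2 := hτmono 1 2 (by simp only [Finset.mem_Ioc]; omega) h2KP
      (by omega)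
    have b1 := halfAngleBound (v := v) hθ0 hθπ ht1 (ht12.trans hTv)
    have b2 := halfAngleBound (v := v) hθ0 hθπ hT hTv
    rw [← he] at b1 b2
    linarith
  -- remaining positive zeros vs Q positive zeros
  have hsplit3 : ∑ k ∈ Finset.Ioc (2 : ℤ) (pp : ℤ), ((v : ℂ) * e - ((τ k : ℝ) : ℂ)).arg
      = (∑ k ∈ Finset.Ioc (2 : ℤ) ((qp : ℤ) + 2), ((v : ℂ) * e - ((τ k : ℝ) : ℂ)).arg)
        + ∑ k ∈ Finset.Ioc ((qp : ℤ) + 2) (pp : ℤ), ((v : ℂ) * e - ((τ k : ℝ) : ℂ)).arg :=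
    sum_Ioc_split (by omega) hppqp
  have hB2b : ∑ k ∈ Finset.Ioc (2 : ℤ) ((qp : ℤ) + 2), ((v : ℂ) * e - ((τ k : ℝ) : ℂ)).arg
      ≤ ∑ j ∈ Finset.Ioc (0 : ℤ) (qp : ℤ), ((v : ℂ) * e - ((γ j : ℝ) : ℂ)).arg := by
    have hmap : Finset.Ioc (2 : ℤ) ((qp : ℤ) + 2)
        = (Finset.Ioc (0 : ℤ) (qp : ℤ)).map (addLeftEmbedding (2 : ℤ)) := by
      ext x
      simp only [Finset.mem_map, Finset.mem_Ioc, addLeftEmbedding_apply]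
      constructor
      · intro hx; exact ⟨x - 2, by omega, by omega⟩
      · rintro ⟨y, hy, rfl⟩; omega
    rw [hmap, Finset.sum_map]
    refine Finset.sum_le_sum fun j hj => ?_
    rw [Finset.mem_Ioc] at hj
    have hp := pairPos pm pp qm qp hpp τ γ hτmono hτneg hγmono hγpos hC1a hC1b
      j hj.1 hj.2
    simp only [addLeftEmbedding_apply]
    rw [show (2 : ℤ) + j = j + 2 by ring]
    exact hargmono _ _ hp.2
  have hB2c : ∑ k ∈ Finset.Ioc ((qp : ℤ) + 2) (pp : ℤ), ((v : ℂ) * e - ((τ k : ℝ) : ℂ)).arg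
      ≤ ((pp : ℝ) - (qp : ℝ) - 2) * π := by
    have := Finset.sum_le_card_nsmul (Finset.Ioc ((qp : ℤ) + 2) (pp : ℤ))
      (fun k => ((v : ℂ) * e - ((τ k : ℝ) : ℂ)).arg) π (fun k _ => harglepi _)
    rw [Int.card_Ioc] at this
    have hcard : ((((pp : ℤ) - ((qp : ℤ) + 2)).toNat : ℝ)) = (pp : ℝ) - (qp : ℝ) - 2 := by
      have h1 : (0 : ℤ) ≤ (pp : ℤ) - ((qp : ℤ) + 2) := by omega
      rw [show ((((pp : ℤ) - ((qp : ℤ) + 2)).toNat : ℝ))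
          = ((((pp : ℤ) - ((qp : ℤ) + 2)).toNat : ℤ) : ℝ) by push_cast; ring,
        Int.toNat_of_nonneg h1]
      push_cast
      ring
    calc ∑ k ∈ Finset.Ioc ((qp : ℤ) + 2) (pp : ℤ), ((v : ℂ) * e - ((τ k : ℝ) : ℂ)).arg
        ≤ (((pp : ℤ) - ((qp : ℤ) + 2)).toNat : ℝ) * π := by
          rw [← nsmul_eq_mul]; exact this
    _ = ((pp : ℝ) - (qp : ℝ) - 2) * π := by rw [hcard]
  have hrθ : θ < (r : ℝ) * θ := by
    have : (2 : ℝ) ≤ (r : ℝ) := by exact_mod_cast hr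
    nlinarith
  rw [hsplitP, hsplitQ, hsplit2, hsplit3]
  linarith

theorem stmt6 (r pm pp qm qp : ℕ) (hr : 2 ≤ r) (hpp : 2 ≤ pp) (τ γ : ℤ → ℝ)
    (hτmono : ∀ j k : ℤ, j ∈ Finset.Ioc (-(pm : ℤ)) (pp : ℤ) →
      k ∈ Finset.Ioc (-(pm : ℤ)) (pp : ℤ) → j ≤ k → τ j ≤ τ k)
    (hτneg : ∀ k ∈ Finset.Ioc (-(pm : ℤ)) (pp : ℤ), k ≤ 0 → τ k < 0)
    (hτpos : ∀ k ∈ Finset.Ioc (-(pm : ℤ)) (pp : ℤ), 1 ≤ k → 0 < τ k)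
    (hγmono : ∀ j k : ℤ, j ∈ Finset.Ioc (-(qm : ℤ)) (qp : ℤ) →
      k ∈ Finset.Ioc (-(qm : ℤ)) (qp : ℤ) → j ≤ k → γ j ≤ γ k)
    (hγneg : ∀ j ∈ Finset.Ioc (-(qm : ℤ)) (qp : ℤ), j ≤ 0 → γ j < 0)
    (hγpos : ∀ j ∈ Finset.Ioc (-(qm : ℤ)) (qp : ℤ), 1 ≤ j → 0 < γ j)
    (hC1a : ∀ x : ℝ, τ 2 ≤ x → nPos qm qp γ x + 2 ≤ nPos pm pp τ x)
    (hC1b : ∀ x : ℝ, 0 < x → x ≤ τ 2 → nPos qm qp γ x = 0)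
    (hC2 : ∀ x : ℝ, x < 0 → nNeg pm pp τ x ≤ nNeg qm qp γ x)
    (hC3 : ∀ t : ℂ, 0 < ‖t‖ → ‖t‖ < τ 2 → 0 < t.arg →
      t.arg < Real.pi / r → 0 < (Rfun r pm pp qm qp τ γ t).im)
 :
    ∀ θ : ℝ, 0 < θ → θ < Real.pi / r →
      ∃! τv : ℝ, 0 < τv ∧
        angleSum pm pp qm qp τ γ ((τv : ℂ) * Complex.exp ((θ : ℂ) * Complex.I)) - r * θ
          = ((pp : ℝ) - (qp : ℝ) - 1) * Real.pi := by
  intro θ hθ0 hθr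
  have hrR : (2 : ℝ) ≤ (r : ℝ) := by exact_mod_cast hr
  have hr0 : (0 : ℝ) < (r : ℝ) := by linarith
  have hπ := Real.pi_pos
  have hθπ2 : θ < π / 2 :=
    lt_of_lt_of_le hθr (div_le_div_of_nonneg_left hπ.le two_pos hrR)
  have hθπ : θ < π := by linarith
  have hs : 0 < Real.sin θ := Real.sin_pos_of_pos_of_lt_pi hθ0 hθπ
  have hrθ : (r : ℝ) * θ < π := by
    have := (lt_div_iff₀ hr0).1 hθr
    linarith
  have h2KP : (2 : ℤ) ∈ Finset.Ioc (-(pm : ℤ)) (pp : ℤ) := by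
    simp only [Finset.mem_Ioc]; omega
  have hT : 0 < τ 2 := hτpos 2 h2KP (by norm_num)
  set e : ℂ := Complex.exp ((θ : ℂ) * Complex.I) with he
  set F : ℝ → ℝ := fun v =>
    (∑ k ∈ Finset.Ioc (-(pm : ℤ)) (pp : ℤ), ((v : ℂ) * e - ((τ k : ℝ) : ℂ)).arg)
      - (∑ j ∈ Finset.Ioc (-(qm : ℤ)) (qp : ℤ), ((v : ℂ) * e - ((γ j : ℝ) : ℂ)).arg)
      - (r : ℝ) * θ with hF
  set L : ℝ := ((pp : ℝ) - (qp : ℝ) - 1) * π with hL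
  have hFang : ∀ v : ℝ,
      angleSum pm pp qm qp τ γ ((v : ℂ) * e) - (r : ℝ) * θ = F v := fun v => rfl
  have himt : ∀ v : ℝ, 0 < v → ∀ a : ℝ, 0 < ((v : ℂ) * e - (a : ℂ)).im := by
    intro v hv a; rw [he, ray_im]; positivity
  -- derivative of F
  have hderiv : ∀ v : ℝ, 0 < v → HasDerivAt F
      ((∑ k ∈ Finset.Ioc (-(pm : ℤ)) (pp : ℤ), (e / ((v : ℂ) * e - ((τ k : ℝ) : ℂ))).im)
        - ∑ j ∈ Finset.Ioc (-(qm : ℤ)) (qp : ℤ), (e / ((v : ℂ) * e - ((γ j : ℝ) : ℂ))).im) v := by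
    intro v hv
    have h1 : HasDerivAt (fun s : ℝ =>
        ∑ k ∈ Finset.Ioc (-(pm : ℤ)) (pp : ℤ), ((s : ℂ) * e - ((τ k : ℝ) : ℂ)).arg)
        (∑ k ∈ Finset.Ioc (-(pm : ℤ)) (pp : ℤ), (e / ((v : ℂ) * e - ((τ k : ℝ) : ℂ))).im) v :=
      HasDerivAt.fun_sum fun k _ => hasDerivAt_argRay (himt v hv (τ k))
    have h2 : HasDerivAt (fun s : ℝ =>
        ∑ j ∈ Finset.Ioc (-(qm : ℤ)) (qp : ℤ), ((s : ℂ) * e - ((γ j : ℝ) : ℂ)).arg)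
        (∑ j ∈ Finset.Ioc (-(qm : ℤ)) (qp : ℤ), (e / ((v : ℂ) * e - ((γ j : ℝ) : ℂ))).im) v :=
      HasDerivAt.fun_sum fun j _ => hasDerivAt_argRay (himt v hv (γ j))
    exact (h1.sub h2).sub_const _
  have hcont : ContinuousOn F (Set.Ioi (0 : ℝ)) :=
    fun v hv => ((hderiv v hv).continuousAt).continuousWithinAt
  -- negativity of the derivative on (0, τ 2)
  have hDneg : ∀ v : ℝ, 0 < v → v < τ 2 → deriv F v < 0 := by
    intro v hv hvT
    rw [(hderiv v hv).deriv]
    set z : ℂ := (v : ℂ) * e with hz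
    have hzim : 0 < z.im := by
      have := himt v hv 0
      rw [Complex.ofReal_zero, sub_zero] at this
      rw [hz]
      exact this
    have habs : ‖z‖ = v := by
      rw [hz, norm_mul, he, Complex.norm_exp_ofReal_mul_I]
      simp [abs_of_pos hv]
    have harg : z.arg = θ := by
      rw [hz, Complex.arg_real_mul _ hv, he, Complex.exp_mul_I]
      exact Complex.arg_cos_add_sin_mul_I (θ := θ) ⟨by linarith, by linarith⟩
    have hR := hC3 z (by rw [habs]; exact hv) (by rw [habs]; exact hvT)
      (by rw [harg]; exact hθ0) (by rw [harg]; exact hθr)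
    have hRim : (Rfun r pm pp qm qp τ γ z).im
        = -(∑ k ∈ Finset.Ioc (-(pm : ℤ)) (pp : ℤ), (z / (z - ((τ k : ℝ) : ℂ))).im)
          + ∑ j ∈ Finset.Ioc (-(qm : ℤ)) (qp : ℤ), (z / (z - ((γ j : ℝ) : ℂ))).im := by
      rw [Rfun_eq r pm pp qm qp τ γ z hzim, Complex.add_im, Complex.sub_im,
        Complex.im_sum, Complex.im_sum]
      simp
    have hterm : ∀ a : ℝ, (e / (z - (a : ℂ))).im = (z / (z - (a : ℂ))).im / v := by
      intro a
      have hev : e = z / (v : ℂ) := by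
        rw [hz, mul_div_cancel_left₀ _ (show ((v : ℝ) : ℂ) ≠ 0 from by
          exact_mod_cast hv.ne')]
      rw [hev, div_right_comm, Complex.div_ofReal_im]
    simp_rw [hterm, ← Finset.sum_div]
    rw [div_sub_div_same]
    apply div_neg_of_neg_of_pos _ hv
    linarith [hR, hRim]
  have hanti : StrictAntiOn F (Set.Ioc 0 (τ 2)) := by
    refine strictAntiOn_of_deriv_neg (convex_Ioc 0 (τ 2))
      (hcont.mono fun x hx => hx.1) ?_
    intro v hv
    rw [interior_Ioc] at hv
    exact hDneg v hv.1 hv.2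
  -- limit at 0+
  have hlim : Tendsto F (nhdsWithin 0 (Set.Ioi 0))
      (nhds (((pp : ℝ) - (qp : ℝ)) * π - (r : ℝ) * θ)) := by
    have hP : Tendsto (fun v : ℝ =>
        ∑ k ∈ Finset.Ioc (-(pm : ℤ)) (pp : ℤ), ((v : ℂ) * e - ((τ k : ℝ) : ℂ)).arg)
        (nhdsWithin 0 (Set.Ioi 0))
        (nhds (∑ k ∈ Finset.Ioc (-(pm : ℤ)) (pp : ℤ), if (1 : ℤ) ≤ k then π else 0)) := by
      refine tendsto_finset_sum _ fun k hk => ?_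
      by_cases h1 : (1 : ℤ) ≤ k
      · rw [if_pos h1, he]
        exact tendsto_argRay_pos hθ0 hθπ (hτpos k hk h1)
      · rw [if_neg h1, he]
        exact tendsto_argRay_neg hθ0 hθπ (hτneg k hk (by omega))
    have hQ : Tendsto (fun v : ℝ =>
        ∑ j ∈ Finset.Ioc (-(qm : ℤ)) (qp : ℤ), ((v : ℂ) * e - ((γ j : ℝ) : ℂ)).arg)
        (nhdsWithin 0 (Set.Ioi 0))
        (nhds (∑ j ∈ Finset.Ioc (-(qm : ℤ)) (qp : ℤ), if (1 : ℤ) ≤ j then π else 0)) := by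
      refine tendsto_finset_sum _ fun j hj => ?_
      by_cases h1 : (1 : ℤ) ≤ j
      · rw [if_pos h1, he]
        exact tendsto_argRay_pos hθ0 hθπ (hγpos j hj h1)
      · rw [if_neg h1, he]
        exact tendsto_argRay_neg hθ0 hθπ (hγneg j hj (by omega))
    have hsum : ∀ n : ℕ, ∀ m : ℕ,
        ∑ k ∈ Finset.Ioc (-(m : ℤ)) (n : ℤ), (if (1 : ℤ) ≤ k then π else 0) = (n : ℝ) * π := by
      intro n m
      rw [← Finset.sum_filter]
      have hfil : (Finset.Ioc (-(m : ℤ)) (n : ℤ)).filter (fun k => 1 ≤ k)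
          = Finset.Ioc (0 : ℤ) (n : ℤ) := by
        ext x
        simp only [Finset.mem_filter, Finset.mem_Ioc]
        omega
      rw [hfil, Finset.sum_const, Int.card_Ioc, nsmul_eq_mul]
      simp
    have := (hP.sub hQ).sub_const ((r : ℝ) * θ)
    rw [hsum pp pm, hsum qp qm] at this
    rw [show ((pp : ℝ) - (qp : ℝ)) * π - (r : ℝ) * θ
        = (pp : ℝ) * π - (qp : ℝ) * π - (r : ℝ) * θ by ring]
    exact this
  -- the tail bound
  have htail : ∀ y : ℝ, τ 2 ≤ y → F y < L := by
    intro y hy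
    have := tailBound r pm pp qm qp hr hpp τ γ hτmono hτneg hτpos hγmono hγpos
      hC1a hC1b hC2 θ y hθ0 hθπ hy
    rw [hF, hL]
    exact this
  -- pick a point where F exceeds L
  have hLlt : L < ((pp : ℝ) - (qp : ℝ)) * π - (r : ℝ) * θ := by
    rw [hL]; nlinarith
  have hev : ∀ᶠ v in nhdsWithin (0 : ℝ) (Set.Ioi 0), L < F v :=
    hlim.eventually (eventually_gt_nhds hLlt)
  have hmem : Set.Ioo (0 : ℝ) (τ 2) ∈ nhdsWithin (0 : ℝ) (Set.Ioi 0) :=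
    Ioo_mem_nhdsGT_of_mem ⟨le_refl 0, hT⟩
  obtain ⟨a, haL, ha0, haT⟩ : ∃ a : ℝ, L < F a ∧ 0 < a ∧ a < τ 2 := by
    have h := (hev.and (Filter.eventually_of_mem hmem fun x hx => hx)).exists
    obtain ⟨a, h1, h2⟩ := h
    exact ⟨a, h1, h2.1, h2.2⟩
  have hFT : F (τ 2) < L := htail (τ 2) le_rfl
  -- IVT
  have hIcc : Set.Icc a (τ 2) ⊆ Set.Ioi (0 : ℝ) :=
    fun x hx => lt_of_lt_of_le ha0 hx.1
  obtain ⟨c, hc, hFc⟩ := intermediate_value_Icc' haT.le (hcont.mono hIcc)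
    ⟨hFT.le, haL.le⟩
  have hc0 : 0 < c := lt_of_lt_of_le ha0 hc.1
  refine ⟨c, ⟨hc0, ?_⟩, ?_⟩
  · rw [hFang c, hFc, hL]
  · rintro y ⟨hy0, hyeq⟩
    have hyL : F y = L := by rw [← hFang y, hyeq, hL]
    have hyT : y ≤ τ 2 := by
      by_contra h
      push_neg at h
      exact absurd hyL (htail y h.le).ne
    have hcT : c ≤ τ 2 := hc.2
    exact hanti.injOn ⟨hy0, hyT⟩ ⟨hc0, hcT⟩ (by rw [hyL, hFc])
end
end
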